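/- arXiv:0710.2347 — 5 statements merged into one kernel-verified Lean document; each statement's English description precedes it below -/
import Mathlib

section
/- For every set S of positive reals, the class of finite convexly ordered ultrametric spaces with distances in S has the ordering property: for every finite ultrametric space X with nonzero distances in S there exists a finite ultrametric space Y with nonzero distances in S such that for every convex linear ordering <^X on X and every convex linear ordering <^Y on Y, the ordered space (Y,<^Y) contains a copy of (X,<^X). -/
/-- A finite ultrametric space with all nonzero distances in `S`. -/
structure FinUltra (S : Set ℝ) where
  n : ℕ
  d : Fin n → Fin n → ℝ
  d_self : ∀ x, d x x = 0
  d_symm : ∀ x y, d x y = d y x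
  d_mem : ∀ x y, x ≠ y → d x y ∈ S
  ultra : ∀ x y z, d x z ≤ max (d x y) (d y z)

/-- `r` is a strict total order (irreflexive, transitive, trichotomous). -/
def IsSTO {X : Type*} (r : X → X → Prop) : Prop :=
  (∀ x, ¬ r x x) ∧ (∀ x y z, r x y → r y z → r x z) ∧ (∀ x y, r x y ∨ x = y ∨ r y x)

/-- `r` is a convex linear ordering with respect to the distance `d` : a strict total
order for which every closed metric ball is an interval (equivalently,
`r x y → r y z → d x y ≤ d x z ∧ d y z ≤ d x z`). -/
def IsConvexSTO {X : Type*} (d : X → X → ℝ) (r : X → X → Prop) : Prop :=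
  IsSTO r ∧ ∀ x y z, r x y → r y z → d x y ≤ d x z ∧ d y z ≤ d x z

/-- `A` is a copy of the ordered space `(X, rX)` inside `(Z, rZ)` : the image of an
isometric, order-preserving embedding. -/
def IsOrdCopy {S : Set ℝ} (X Z : FinUltra S) (rX : Fin X.n → Fin X.n → Prop)
    (rZ : Fin Z.n → Fin Z.n → Prop) (A : Set (Fin Z.n)) : Prop :=
  ∃ f : Fin X.n → Fin Z.n, Set.range f = A ∧
    (∀ a b, Z.d (f a) (f b) = X.d a b) ∧ (∀ a b, rX a b → rZ (f a) (f b))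

/-- `A` is an isometric copy of `X` inside `Z`. -/
def IsCopy {S : Set ℝ} (X Z : FinUltra S) (A : Set (Fin Z.n)) : Prop :=
  ∃ f : Fin X.n → Fin Z.n, Set.range f = A ∧ ∀ a b, Z.d (f a) (f b) = X.d a b

/-- The number τ(X) = |cLO(X)| / |iso(X)|. -/
noncomputable def tau (S : Set ℝ) (X : FinUltra S) : ℕ :=
  Nat.card {r : Fin X.n → Fin X.n → Prop // IsConvexSTO X.d r} /
    Nat.card {g : Fin X.n ≃ Fin X.n // ∀ a b, X.d (g a) (g b) = X.d a b}

/-!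
Let `D` be the set of distances of `X` and `m = |X|`. For `Y` take the functions `D → Fin m`,
the distance of `u ≠ v` being the largest `s ∈ D` with `u s ≠ v s`: the complete `m`-branching
tree with levels `D`. A convex order on `Y` orders the `m` children of every ball, and recording
at every level the position of the child containing a point turns any convex order on `Y` into
the colexicographic one by an isometry of `Y`. So it suffices to embed `(X, <)` isometrically into
`Y` with the colexicographic order, which `x ↦ (s ↦ #{t < x | s ≤ d t x})` does.
-/

open Finset Function

section ConvexOrder

variable {X : Type*} {d : X → X → ℝ} {r : X → X → Prop} {a a' b b' x y : X} {s : ℝ}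

structure IsUltrametric (d : X → X → ℝ) : Prop where
  dist_self : ∀ x, d x x = 0
  symm : ∀ x y, d x y = d y x
  le_max : ∀ x y z, d x z ≤ max (d x y) (d y z)

theorem IsUltrametric.nonneg (hd : IsUltrametric d) (x y : X) : 0 ≤ d x y := by
  simpa [hd.dist_self, hd.symm y x] using hd.le_max x y x

theorem IsSTO.ne (hr : IsSTO r) (h : r a b) : a ≠ b := by
  rintro rfl
  exact hr.1 a h

theorem IsConvexSTO.comap {Z : Type*} (hr : IsConvexSTO d r) (f : Z → X) (hf : Injective f) :
    IsConvexSTO (fun u v => d (f u) (f v)) (fun u v => r (f u) (f v)) := by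
  refine ⟨⟨fun u => hr.1.1 (f u), fun u v w => hr.1.2.1 (f u) (f v) (f w), fun u v => ?_⟩,
    fun u v w => hr.2 (f u) (f v) (f w)⟩
  rcases hr.1.2.2 (f u) (f v) with h | h | h
  exacts [Or.inl h, Or.inr (Or.inl (hf h)), Or.inr (Or.inr h)]

theorem IsConvexSTO.rel_of_dist_lt_left (hr : IsConvexSTO d r) (hab : r a b)
    (h : d a a' < d a b) : r a' b := by
  rcases hr.1.2.2 a' b with h' | rfl | h'
  · exact h'
  · exact absurd h (lt_irrefl _)
  · exact absurd (hr.2 a b a' hab h').1 h.not_ge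

theorem IsConvexSTO.rel_of_dist_lt_right (hr : IsConvexSTO d r) (hsymm : ∀ x y, d x y = d y x)
    (hab : r a b) (h : d b b' < d a b) : r a b' := by
  rcases hr.1.2.2 a b' with h' | rfl | h'
  · exact h'
  · exact absurd (hsymm a b ▸ h) (lt_irrefl _)
  · exact absurd ((hr.2 b' a b h' hab).2.trans_eq (hsymm b' b)) h.not_ge

theorem IsConvexSTO.rel_of_dist_lt (hr : IsConvexSTO d r) (hd : IsUltrametric d) (hab : r a b)
    (ha : d a a' < d a b) (hb : d b b' < d a b) : r a' b' := by
  have h : d a b ≤ d a' b := by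
    have := hd.le_max a a' b
    rw [le_max_iff] at this
    exact this.resolve_left ha.not_ge
  exact hr.rel_of_dist_lt_right hd.symm (hr.rel_of_dist_lt_left hab ha) (hb.trans_le h)

variable [Fintype X]

open scoped Classical in
noncomputable def farPredecessors (d : X → X → ℝ) (r : X → X → Prop) (s : ℝ) (x : X) :
    Finset X :=
  univ.filter fun t => r t x ∧ s ≤ d t x

theorem mem_farPredecessors {t : X} : t ∈ farPredecessors d r s x ↔ r t x ∧ s ≤ d t x := by
  simp [farPredecessors]

theorem farPredecessors_subset (hr : IsConvexSTO d r) (hxy : r x y) :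
    farPredecessors d r s x ⊆ farPredecessors d r s y := by
  intro t ht
  rw [mem_farPredecessors] at ht ⊢
  exact ⟨hr.1.2.1 t x y ht.1 hxy, ht.2.trans (hr.2 t x y ht.1 hxy).1⟩

theorem farPredecessors_eq (hr : IsConvexSTO d r) (hd : IsUltrametric d) (hxy : r x y)
    (hs : d x y < s) : farPredecessors d r s x = farPredecessors d r s y := by
  refine (farPredecessors_subset hr hxy).antisymm fun t ht => ?_
  rw [mem_farPredecessors] at ht ⊢
  rcases hr.1.2.2 t x with htx | rfl | hxt
  · have := hd.le_max t x y
    rw [le_max_iff] at this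
    exact ⟨htx, ht.2.trans (this.resolve_right (hs.trans_le ht.2).not_ge)⟩
  · exact absurd hs ht.2.not_gt
  · exact absurd hs (ht.2.trans (hr.2 x t y hxt ht.1).2).not_gt

theorem card_farPredecessors_lt (hr : IsConvexSTO d r) (hxy : r x y) (hs : s ≤ d x y) :
    #(farPredecessors d r s x) < #(farPredecessors d r s y) := by
  refine card_lt_card ((ssubset_iff_of_subset (farPredecessors_subset hr hxy)).2 ⟨x, ?_, ?_⟩)
  · exact mem_farPredecessors.2 ⟨hxy, hs⟩
  · exact fun h => hr.1.1 x (mem_farPredecessors.1 h).1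

theorem card_farPredecessors_lt_card (hr : IsSTO r) :
    #(farPredecessors d r s x) < Fintype.card X :=
  card_lt_univ_of_notMem fun h => hr.1 x (mem_farPredecessors.1 h).1

end ConvexOrder

theorem exists_ne_forall_gt_eq {ι β : Type*} [LinearOrder ι] [Fintype ι] {u v : ι → β}
    (h : u ≠ v) : ∃ i, u i ≠ v i ∧ ∀ j > i, u j = v j := by
  classical
  have hne : (univ.filter fun i => u i ≠ v i).Nonempty := by
    obtain ⟨i, hi⟩ := Function.ne_iff.1 h
    exact ⟨i, by simpa using hi⟩
  refine ⟨_, (mem_filter.1 (max'_mem _ hne)).2, fun j hj => ?_⟩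
  by_contra hne'
  exact hj.not_ge (le_max' _ j (by simpa using hne'))

section TreeSpace

variable {ι β : Type*} [Fintype ι] [DecidableEq β] (e : ι → ℝ) {u v : ι → β} {i : ι}

noncomputable def treeDist (u v : ι → β) : ℝ :=
  (univ.filter fun i => u i ≠ v i).fold max 0 e

theorem le_treeDist (hi : u i ≠ v i) : e i ≤ treeDist e u v :=
  (le_fold_max _).2 (Or.inr ⟨i, by simpa using hi, le_rfl⟩)

theorem isUltrametric_treeDist : IsUltrametric (treeDist e : (ι → β) → _) where
  dist_self u := by simp [treeDist]
  symm u v := by simp only [treeDist, ne_comm]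
  le_max u v w := by
    refine (fold_max_le _).2 ⟨le_max_of_le_left ((le_fold_max _).2 (Or.inl le_rfl)), fun i hi => ?_⟩
    by_cases huv : u i = v i
    · exact le_max_of_le_right (le_treeDist e fun h => (mem_filter.1 hi).2 (huv.trans h))
    · exact le_max_of_le_left (le_treeDist e huv)

variable {e} [LinearOrder ι]

theorem treeDist_eq (he : Monotone e) (he0 : 0 ≤ e i) (hi : u i ≠ v i)
    (h : ∀ j > i, u j = v j) : treeDist e u v = e i := by
  refine le_antisymm ((fold_max_le _).2 ⟨he0, fun j hj => he (not_lt.1 fun hij => ?_)⟩)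
    (le_treeDist e hi)
  exact (mem_filter.1 hj).2 (h j hij)

theorem treeDist_lt (he : StrictMono e) (hpos : 0 < e i) (h : ∀ j ≥ i, u j = v j) :
    treeDist e u v < e i := by
  refine (fold_max_lt _).2 ⟨hpos, fun j hj => he (not_le.1 fun hij => ?_)⟩
  exact (mem_filter.1 hj).2 (h j hij)

theorem toColex_lt_and_treeDist_eq {m : ℕ} {u v : ι → Fin m} (he : Monotone e) (he0 : 0 ≤ e i)
    (hi : u i < v i) (h : ∀ j > i, u j = v j) :
    toColex u < toColex v ∧ treeDist e u v = e i :=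
  ⟨⟨i, h, hi⟩, treeDist_eq he he0 hi.ne h⟩

end TreeSpace

section SiblingRank

variable {ι : Type*} [LinearOrder ι] {e : ι → ℝ} {m : ℕ}
  {r : (ι → Fin m) → (ι → Fin m) → Prop} {u v : ι → Fin m} {i : ι}

open scoped Classical in
noncomputable def siblingsBelow (r : (ι → Fin m) → (ι → Fin m) → Prop) (u : ι → Fin m) (i : ι) :
    Finset (Fin m) :=
  univ.filter fun c => r (update u i c) u

theorem mem_siblingsBelow {c : Fin m} : c ∈ siblingsBelow r u i ↔ r (update u i c) u := by
  simp [siblingsBelow]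

theorem self_notMem_siblingsBelow (hr : IsSTO r) : u i ∉ siblingsBelow r u i := by
  rw [mem_siblingsBelow, update_eq_self]
  exact hr.1 u

variable [Fintype ι]

theorem treeDist_update_self (he : Monotone e) (hpos : ∀ i, 0 < e i) {c : Fin m} (hc : c ≠ u i) :
    treeDist e (update u i c) u = e i :=
  treeDist_eq he (hpos i).le (by simpa using hc) fun _ hj => update_of_ne hj.ne' _ _

theorem treeDist_update_update_lt (he : StrictMono e) (hpos : ∀ i, 0 < e i)
    (h : ∀ j > i, u j = v j) (c : Fin m) : treeDist e (update u i c) (update v i c) < e i := by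
  refine treeDist_lt he (hpos i) fun j hj => ?_
  rcases hj.lt_or_eq with hj | rfl
  · simp [update_of_ne hj.ne', h j hj]
  · simp

theorem siblingsBelow_subset_of_ge (hr : IsConvexSTO (treeDist e) r) (he : StrictMono e)
    (hpos : ∀ i, 0 < e i) (h : ∀ j ≥ i, u j = v j) :
    siblingsBelow r u i ⊆ siblingsBelow r v i := by
  intro c hc
  rw [mem_siblingsBelow] at hc ⊢
  have hcu : c ≠ u i := by
    rintro rfl
    rw [update_eq_self] at hc
    exact hr.1.1 u hc
  have hdist := treeDist_update_self he.monotone hpos hcu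
  refine hr.rel_of_dist_lt (isUltrametric_treeDist e) hc ?_ ?_
  · rw [hdist]
    exact treeDist_update_update_lt he hpos (fun j hj => h j hj.le) c
  · rw [hdist]
    exact treeDist_lt he (hpos i) h

theorem siblingsBelow_eq_of_ge (hr : IsConvexSTO (treeDist e) r) (he : StrictMono e)
    (hpos : ∀ i, 0 < e i) (h : ∀ j ≥ i, u j = v j) :
    siblingsBelow r u i = siblingsBelow r v i :=
  (siblingsBelow_subset_of_ge hr he hpos h).antisymm
    (siblingsBelow_subset_of_ge hr he hpos fun j hj => (h j hj).symm)

theorem siblingsBelow_ssubset (hr : IsConvexSTO (treeDist e) r) (he : StrictMono e)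
    (hpos : ∀ i, 0 < e i) (huv : r u v) (hi : u i ≠ v i) (h : ∀ j > i, u j = v j) :
    siblingsBelow r u i ⊂ siblingsBelow r v i := by
  have huv' : treeDist e u v = e i := treeDist_eq he.monotone (hpos i).le hi h
  refine (ssubset_iff_of_subset fun c hc => ?_).2 ⟨u i, ?_, self_notMem_siblingsBelow hr.1⟩
  · rw [mem_siblingsBelow] at hc ⊢
    have hle : treeDist e u v ≤ treeDist e (update u i c) v := (hr.2 _ u v hc huv).2
    refine hr.rel_of_dist_lt_left (hr.1.2.1 _ _ _ hc huv) ?_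
    exact (treeDist_update_update_lt he hpos h c).trans_le (huv' ▸ hle)
  · rw [mem_siblingsBelow]
    refine hr.rel_of_dist_lt_left huv ?_
    simpa [huv'] using treeDist_update_update_lt he hpos h (u i)

noncomputable def siblingRank (hr : IsSTO r) (u : ι → Fin m) (i : ι) : Fin m :=
  ⟨#(siblingsBelow r u i),
    (card_lt_univ_of_notMem (self_notMem_siblingsBelow hr)).trans_eq (Fintype.card_fin m)⟩

theorem siblingRank_lt_and_treeDist_eq (hr : IsConvexSTO (treeDist e) r) (he : StrictMono e)
    (hpos : ∀ i, 0 < e i) (huv : r u v) :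
    toColex (siblingRank hr.1 u) < toColex (siblingRank hr.1 v) ∧
      treeDist e (siblingRank hr.1 u) (siblingRank hr.1 v) = treeDist e u v := by
  obtain ⟨i, hi, h⟩ := exists_ne_forall_gt_eq (hr.1.ne huv)
  have hgt : ∀ j > i, siblingRank hr.1 u j = siblingRank hr.1 v j := fun j hj =>
    Fin.ext (congrArg card (siblingsBelow_eq_of_ge hr he hpos fun k hk => h k (hj.trans_le hk)))
  have hlt : siblingRank hr.1 u i < siblingRank hr.1 v i :=
    card_lt_card (siblingsBelow_ssubset hr he hpos huv hi h)
  rw [treeDist_eq he.monotone (hpos i).le hi h]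
  exact toColex_lt_and_treeDist_eq he.monotone (hpos i).le hlt hgt

theorem treeDist_siblingRank (hr : IsConvexSTO (treeDist e) r) (he : StrictMono e)
    (hpos : ∀ i, 0 < e i) (u v : ι → Fin m) :
    treeDist e (siblingRank hr.1 u) (siblingRank hr.1 v) = treeDist e u v := by
  have hd := isUltrametric_treeDist (β := Fin m) e
  rcases hr.1.2.2 u v with h | rfl | h
  · exact (siblingRank_lt_and_treeDist_eq hr he hpos h).2
  · simp only [hd.dist_self]
  · rw [hd.symm, (siblingRank_lt_and_treeDist_eq hr he hpos h).2, hd.symm]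

theorem rel_of_siblingRank_lt (hr : IsConvexSTO (treeDist e) r) (he : StrictMono e)
    (hpos : ∀ i, 0 < e i) (h : toColex (siblingRank hr.1 u) < toColex (siblingRank hr.1 v)) :
    r u v := by
  rcases hr.1.2.2 u v with huv | rfl | hvu
  · exact huv
  · exact absurd h (lt_irrefl _)
  · exact absurd h (siblingRank_lt_and_treeDist_eq hr he hpos hvu).1.not_gt

theorem siblingRank_injective (hr : IsConvexSTO (treeDist e) r) (he : StrictMono e)
    (hpos : ∀ i, 0 < e i) : Injective (siblingRank hr.1) := by
  intro u v huv
  rcases hr.1.2.2 u v with h | h | h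
  · exact absurd (congrArg toColex huv) (siblingRank_lt_and_treeDist_eq hr he hpos h).1.ne
  · exact h
  · exact absurd (congrArg toColex huv.symm) (siblingRank_lt_and_treeDist_eq hr he hpos h).1.ne

end SiblingRank

section ColexCode

variable {X ι : Type*} [Fintype X] [LinearOrder ι] [Fintype ι] {d : X → X → ℝ}
  {r : X → X → Prop} {e : ι → ℝ} {m : ℕ}

noncomputable def colexCode (d : X → X → ℝ) (r : X → X → Prop) (e : ι → ℝ) (hr : IsSTO r)
    (hm : Fintype.card X ≤ m) (x : X) (i : ι) : Fin m :=
  ⟨#(farPredecessors d r (e i) x), (card_farPredecessors_lt_card hr).trans_le hm⟩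

theorem colexCode_lt_and_treeDist_eq (hr : IsConvexSTO d r) (hd : IsUltrametric d)
    (he : StrictMono e) (hde : ∀ x y, x ≠ y → ∃ i, d x y = e i) (hm : Fintype.card X ≤ m)
    {x y : X} (hxy : r x y) :
    toColex (colexCode d r e hr.1 hm x) < toColex (colexCode d r e hr.1 hm y) ∧
      treeDist e (colexCode d r e hr.1 hm x) (colexCode d r e hr.1 hm y) = d x y := by
  obtain ⟨i, hi⟩ := hde x y (hr.1.ne hxy)
  have hgt : ∀ j > i, colexCode d r e hr.1 hm x j = colexCode d r e hr.1 hm y j := fun j hj =>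
    Fin.ext (congrArg card (farPredecessors_eq hr hd hxy (hi ▸ he hj)))
  have hlt : colexCode d r e hr.1 hm x i < colexCode d r e hr.1 hm y i :=
    card_farPredecessors_lt hr hxy hi.ge
  rw [hi]
  exact toColex_lt_and_treeDist_eq he.monotone (hi ▸ hd.nonneg x y) hlt hgt

theorem treeDist_colexCode (hr : IsConvexSTO d r) (hd : IsUltrametric d) (he : StrictMono e)
    (hde : ∀ x y, x ≠ y → ∃ i, d x y = e i) (hm : Fintype.card X ≤ m) (x y : X) :
    treeDist e (colexCode d r e hr.1 hm x) (colexCode d r e hr.1 hm y) = d x y := by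
  rcases hr.1.2.2 x y with h | rfl | h
  · exact (colexCode_lt_and_treeDist_eq hr hd he hde hm h).2
  · simp only [(isUltrametric_treeDist e).dist_self, hd.dist_self]
  · rw [(isUltrametric_treeDist e).symm, (colexCode_lt_and_treeDist_eq hr hd he hde hm h).2,
      hd.symm]

theorem exists_treeDist_isometry_rel_embedding (hr : IsConvexSTO d r) (hd : IsUltrametric d)
    (he : StrictMono e) (hpos : ∀ i, 0 < e i) (hde : ∀ x y, x ≠ y → ∃ i, d x y = e i)
    (hm : Fintype.card X ≤ m) {rT : (ι → Fin m) → (ι → Fin m) → Prop}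
    (hrT : IsConvexSTO (treeDist e) rT) :
    ∃ g : X → ι → Fin m,
      (∀ x y, treeDist e (g x) (g y) = d x y) ∧ ∀ x y, r x y → rT (g x) (g y) := by
  have hsurj : Surjective (siblingRank hrT.1) :=
    Finite.injective_iff_surjective.1 (siblingRank_injective hrT he hpos)
  refine ⟨fun x => surjInv hsurj (colexCode d r e hr.1 hm x), fun x y => ?_, fun x y hxy => ?_⟩
  · rw [← treeDist_siblingRank hrT he hpos, surjInv_eq hsurj, surjInv_eq hsurj,
      treeDist_colexCode hr hd he hde hm]
  · refine rel_of_siblingRank_lt hrT he hpos ?_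
    rw [surjInv_eq hsurj, surjInv_eq hsurj]
    exact (colexCode_lt_and_treeDist_eq hr hd he hde hm hxy).1

end ColexCode

noncomputable def FinUltra.ofFintype {S : Set ℝ} {α : Type*} [Fintype α] (d : α → α → ℝ)
    (hd : IsUltrametric d) (hS : ∀ a b, a ≠ b → d a b ∈ S) : FinUltra S where
  n := Fintype.card α
  d a b := d ((Fintype.equivFin α).symm a) ((Fintype.equivFin α).symm b)
  d_self _ := hd.dist_self _
  d_symm _ _ := hd.symm _ _
  d_mem _ _ hab := hS _ _ ((Fintype.equivFin α).symm.injective.ne hab)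
  ultra _ _ _ := hd.le_max _ _ _

@[simp]
theorem FinUltra.ofFintype_d_equivFin {S : Set ℝ} {α : Type*} [Fintype α] {d : α → α → ℝ}
    {hd : IsUltrametric d} {hS : ∀ a b, a ≠ b → d a b ∈ S} (u v : α) :
    (FinUltra.ofFintype d hd hS).d (Fintype.equivFin α u) (Fintype.equivFin α v) = d u v := by
  simp [FinUltra.ofFintype]

/-- Ordering property for the class of finite convexly ordered ultrametric spaces with
distances in `S`. -/
theorem ordering_property_convexly_ordered_ultrametric
    (S : Set ℝ) (hSpos : ∀ s ∈ S, 0 < s) (X : FinUltra S) :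
    ∃ Y : FinUltra S,
      ∀ (rX : Fin X.n → Fin X.n → Prop) (rY : Fin Y.n → Fin Y.n → Prop),
        IsConvexSTO X.d rX → IsConvexSTO Y.d rY →
          ∃ f : Fin X.n → Fin Y.n,
            (∀ a b, Y.d (f a) (f b) = X.d a b) ∧ ∀ a b, rX a b → rY (f a) (f b) := by
  classical
  set D : Finset ℝ := univ.offDiag.image fun p : Fin X.n × Fin X.n => X.d p.1 p.2
  have hXD : ∀ a b, a ≠ b → X.d a b ∈ D := fun a b hab =>
    mem_image.2 ⟨(a, b), by simpa using hab, rfl⟩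
  have hDS : ∀ s ∈ D, s ∈ S := by
    simp only [D, mem_image, mem_offDiag]
    rintro _ ⟨p, ⟨-, -, hp⟩, rfl⟩
    exact X.d_mem _ _ hp
  have he : StrictMono ((↑) : D → ℝ) := Subtype.strictMono_coe _
  have hpos : ∀ s : D, 0 < (s : ℝ) := fun s => hSpos s (hDS s s.2)
  refine ⟨FinUltra.ofFintype (treeDist ((↑) : D → ℝ) : (D → Fin X.n) → _ → ℝ)
    (isUltrametric_treeDist _) fun u v huv => ?_, fun rX rY hX hY => ?_⟩
  · obtain ⟨i, hi, h⟩ := exists_ne_forall_gt_eq huv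
    rw [treeDist_eq he.monotone (hpos i).le hi h]
    exact hDS i i.2
  · have hY' := hY.comap _ (Fintype.equivFin (D → Fin X.n)).injective
    simp only [FinUltra.ofFintype_d_equivFin] at hY'
    obtain ⟨g, hgd, hgr⟩ := exists_treeDist_isometry_rel_embedding hX
      ⟨X.d_self, X.d_symm, X.ultra⟩ he hpos (fun a b hab => ⟨⟨_, hXD a b hab⟩, rfl⟩) (by simp) hY'
    exact ⟨fun a => Fintype.equivFin _ (g a),
      fun a b => (FinUltra.ofFintype_d_equivFin _ _).trans (hgd a b), hgr⟩
end

section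
/- Let S ⊆ (0,∞), let Y be a finite ultrametric space with nonzero distances in S which is convexly order-invariant, and let X be a subspace of Y. Then for every convex linear ordering < on Y and every convex linear ordering <^X on X, the ordered space (Y,<) contains a copy of (X,<^X). -/
/-- `Y` is convexly order-invariant: any two convex linear orderings on `Y` are
isomorphic via a bijective self-isometry. -/
def ConvOrdInv {S : Set ℝ} (Y : FinUltra S) : Prop :=
  ∀ r₁ r₂ : Fin Y.n → Fin Y.n → Prop, IsConvexSTO Y.d r₁ → IsConvexSTO Y.d r₂ →
    ∃ g : Fin Y.n ≃ Fin Y.n, (∀ a b, Y.d (g a) (g b) = Y.d a b) ∧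
      ∀ a b, r₁ a b → r₂ (g a) (g b)

/-! The ordering `rA` of `A` extends to a convex ordering of `Y`: inside each ball, order its
maximal proper subballs by putting those that meet `A` first, in the order `rA` induces on
them, followed by the others, in the order `rY` induces on them. Convex orderings are exactly
the total orders that only depend on which such subballs the two points lie in, so this
relation is again convex. Convex order-invariance of `Y` then carries the extension onto `rY`,
and the restriction of that self-isometry to `A` is the required copy. -/

structure IsUltrametric_s4 {X : Type*} (d : X → X → ℝ) : Prop where
  dist_self : ∀ x, d x x = 0
  symm : ∀ x y, d x y = d y x
  pos : ∀ x y, x ≠ y → 0 < d x y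
  ultra : ∀ x y z, d x z ≤ max (d x y) (d y z)

theorem FinUltra.isUltrametric {S : Set ℝ} (hS : ∀ s ∈ S, 0 < s) (Y : FinUltra S) :
    IsUltrametric_s4 Y.d :=
  ⟨Y.d_self, Y.d_symm, fun x y h => hS _ (Y.d_mem x y h), Y.ultra⟩

namespace IsUltrametric_s4

variable {X : Type*} {d : X → X → ℝ}

theorem restrict (hd : IsUltrametric_s4 d) (A : Set X) : IsUltrametric_s4 (fun a b : A => d a b) :=
  ⟨fun a => hd.dist_self a, fun a b => hd.symm a b,
    fun _ _ h => hd.pos _ _ (Subtype.coe_injective.ne h), fun a b c => hd.ultra a b c⟩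

theorem nonneg_s4 (hd : IsUltrametric_s4 d) (x y : X) : 0 ≤ d x y := by
  have h := hd.ultra x y x
  rwa [hd.dist_self, hd.symm y x, max_self] at h

theorem dist_self_lt (hd : IsUltrametric_s4 d) (x : X) {y z : X} {t : ℝ} (h : d y z < t) :
    d x x < t :=
  (hd.dist_self x).trans_lt ((hd.nonneg_s4 y z).trans_lt h)

theorem dist_lt_of_lt (hd : IsUltrametric_s4 d) {x y z : X} {t : ℝ} (hxy : d x y < t)
    (hyz : d y z < t) : d x z < t :=
  (hd.ultra x y z).trans_lt (max_lt hxy hyz)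

theorem dist_eq_of_lt (hd : IsUltrametric_s4 d) {x y z : X} (h : d x y < d x z) : d y z = d x z :=
  le_antisymm ((hd.ultra y x z).trans (max_le (hd.symm y x ▸ h.le) le_rfl))
    (le_of_not_gt fun h' => (hd.ultra x y z).not_gt (max_lt h h'))

theorem dist_eq_of_lt_of_lt (hd : IsUltrametric_s4 d) {x y x' y' : X} (hx : d x x' < d x y)
    (hy : d y y' < d x y) : d x' y' = d x y := by
  have h₁ : d x' y = d x y := hd.dist_eq_of_lt hx
  have h₂ : d y' x' = d y x' := hd.dist_eq_of_lt (by rwa [hd.symm y x', h₁])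
  rw [hd.symm x' y', h₂, hd.symm y x', h₁]

end IsUltrametric_s4

theorem IsSTO.asymm {X : Type*} {r : X → X → Prop} (h : IsSTO r) {x y : X} (hxy : r x y) :
    ¬ r y x :=
  fun hyx => h.1 x (h.2.1 x y x hxy hyx)

/-- `r x y` depends only on the open balls of radius `d x y` around `x` and `y`. -/
def RespectsBalls {X : Type*} (d : X → X → ℝ) (r : X → X → Prop) : Prop :=
  ∀ x y x' y', r x y → d x x' < d x y → d y y' < d x y → r x' y'

section ConvexOrder

variable {X : Type*} {d : X → X → ℝ} {r : X → X → Prop}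

theorem IsConvexSTO.rel_of_dist_lt_left_s4 (h : IsConvexSTO d r)
    {x y x' : X} (hxy : r x y) (hx : d x x' < d x y) : r x' y := by
  rcases h.1.2.2 x' y with h' | rfl | h'
  · exact h'
  · exact absurd hx (lt_irrefl _)
  · exact absurd (h.2 x y x' hxy h').1 hx.not_ge

theorem IsConvexSTO.rel_of_dist_lt_right_s4 (hd : ∀ x y, d x y = d y x) (h : IsConvexSTO d r)
    {x y y' : X} (hxy : r x y) (hy : d y y' < d x y) : r x y' := by
  rcases h.1.2.2 x y' with h' | rfl | h'
  · exact h'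
  · exact absurd (hd x y ▸ hy) (lt_irrefl _)
  · exact absurd ((h.2 y' x y h' hxy).2.trans_eq (hd y' y)) hy.not_ge

theorem IsConvexSTO.respectsBalls (hd : IsUltrametric_s4 d) (h : IsConvexSTO d r) :
    RespectsBalls d r := by
  intro x y x' y' hxy hx hy
  have hx'y : d x' y = d x y := hd.dist_eq_of_lt hx
  exact h.rel_of_dist_lt_right_s4 hd.symm (h.rel_of_dist_lt_left_s4 hxy hx) (hx'y ▸ hy)

theorem isConvexSTO_of_respectsBalls (hd : IsUltrametric_s4 d)
    (hasymm : ∀ x y, r x y → ¬ r y x) (htotal : ∀ x y, x ≠ y → r x y ∨ r y x)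
    (hballs : RespectsBalls d r)
    (htrans : ∀ x y z, r x y → r y z → d y z = d x y → d x z = d x y → r x z) :
    IsConvexSTO d r := by
  have hconvex : ∀ x y z, r x y → r y z → d x y ≤ d x z ∧ d y z ≤ d x z := by
    intro x y z hxy hyz
    constructor
    · by_contra! h
      exact hasymm y z hyz (hballs x y z y hxy h (hd.dist_self_lt y h))
    · by_contra! h
      exact hasymm x y hxy (hballs y z y x hyz (hd.dist_self_lt y h) (by rwa [hd.symm]))
  refine ⟨⟨fun x h => hasymm x x h h, fun x y z hxy hyz => ?_, fun x y => ?_⟩, hconvex⟩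
  · rcases lt_trichotomy (d x y) (d y z) with h | h | h
    · exact hballs y z x z hyz (by rwa [hd.symm]) (hd.dist_self_lt z h)
    · have hle := (hd.ultra x y z).trans_eq (by rw [h, max_self])
      have hxz := (hconvex x y z hxy hyz).1
      exact htrans x y z hxy hyz h.symm (le_antisymm (hle.trans_eq h.symm) hxz)
    · exact hballs x y x z hxy (hd.dist_self_lt x h) h
  · by_cases h : x = y
    · exact Or.inr (Or.inl h)
    · exact (htotal x y h).imp id Or.inr

end ConvexOrder

section Extension

variable {X : Type*} {d : X → X → ℝ} {A : Set X} {rY : X → X → Prop}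
  {rA : A → A → Prop}

def MeetsBall (d : X → X → ℝ) (A : Set X) (x : X) (t : ℝ) : Prop :=
  ∃ a : A, d x a < t

theorem MeetsBall.congr (hd : IsUltrametric_s4 d) {x x' : X} {t : ℝ} (h : d x x' < t) :
    MeetsBall d A x' t ↔ MeetsBall d A x t :=
  ⟨fun ⟨a, ha⟩ => ⟨a, hd.dist_lt_of_lt h ha⟩,
    fun ⟨a, ha⟩ => ⟨a, hd.dist_lt_of_lt (hd.symm x' x ▸ h) ha⟩⟩

def ExtendOrder (d : X → X → ℝ) (A : Set X) (rY : X → X → Prop) (rA : A → A → Prop)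
    (x y : X) : Prop :=
  (∃ a b : A, d x a < d x y ∧ d y b < d x y ∧ rA a b) ∨
    (MeetsBall d A x (d x y) ∧ ¬ MeetsBall d A y (d x y)) ∨
    (¬ MeetsBall d A x (d x y) ∧ ¬ MeetsBall d A y (d x y) ∧ rY x y)

theorem extendOrder_of_rel (hd : IsUltrametric_s4 d) (hrA : IsSTO rA) {a b : A} (hab : rA a b) :
    ExtendOrder d A rY rA a b := by
  have hpos : 0 < d a b := hd.pos _ _ fun h => hrA.1 a (Subtype.ext h ▸ hab)
  exact Or.inl ⟨a, b, (hd.dist_self a).trans_lt hpos, (hd.dist_self b).trans_lt hpos, hab⟩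

theorem extendOrder_respectsBalls (hd : IsUltrametric_s4 d) (hrY : RespectsBalls d rY) :
    RespectsBalls d (ExtendOrder d A rY rA) := by
  intro x y x' y' h hx hy
  have hx' : MeetsBall d A x' (d x y) ↔ MeetsBall d A x (d x y) := MeetsBall.congr hd hx
  have hy' : MeetsBall d A y' (d x y) ↔ MeetsBall d A y (d x y) := MeetsBall.congr hd hy
  unfold ExtendOrder
  rw [hd.dist_eq_of_lt_of_lt hx hy, hx', hy']
  rcases h with ⟨a, b, ha, hb, hab⟩ | h | ⟨hxA, hyA, hxy⟩
  · exact Or.inl ⟨a, b, hd.dist_lt_of_lt (hd.symm x' x ▸ hx) ha,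
      hd.dist_lt_of_lt (hd.symm y' y ▸ hy) hb, hab⟩
  · exact Or.inr (Or.inl h)
  · exact Or.inr (Or.inr ⟨hxA, hyA, hrY x y x' y' hxy hx hy⟩)

theorem extendOrder_asymm (hd : IsUltrametric_s4 d) (hrY : IsSTO rY)
    (hrA : IsConvexSTO (fun a b : A => d a b) rA) {x y : X}
    (hxy : ExtendOrder d A rY rA x y) : ¬ ExtendOrder d A rY rA y x := by
  unfold ExtendOrder at hxy ⊢
  rw [hd.symm y x]
  rintro (⟨b', a', hb', ha', hba⟩ | ⟨hyA, hxA⟩ | ⟨hyA, hxA, hyx⟩) <;>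
    rcases hxy with ⟨a, b, ha, hb, hab⟩ | ⟨hxA', hyA'⟩ | ⟨hxA', hyA', hxy⟩
  · have hba' : d b' a' = d x y := by
      rw [hd.symm x y] at hb' ha' ⊢; exact hd.dist_eq_of_lt_of_lt hb' ha'
    refine hrA.1.asymm hab (hrA.respectsBalls (hd.restrict A) b' a' b a hba ?_ ?_)
    · exact hba' ▸ hd.dist_lt_of_lt (hd.symm b' y ▸ hb') hb
    · exact hba' ▸ hd.dist_lt_of_lt (hd.symm a' x ▸ ha') ha
  all_goals try (simp only [MeetsBall] at *; tauto)
  exact hrY.asymm hxy hyx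

theorem extendOrder_total (hd : IsUltrametric_s4 d) (hrY : IsSTO rY) (hrA : IsSTO rA)
    {x y : X} (hxy : x ≠ y) :
    ExtendOrder d A rY rA x y ∨ ExtendOrder d A rY rA y x := by
  unfold ExtendOrder
  rw [hd.symm y x]
  by_cases hxA : MeetsBall d A x (d x y) <;> by_cases hyA : MeetsBall d A y (d x y)
  · obtain ⟨a, ha⟩ := hxA
    obtain ⟨b, hb⟩ := hyA
    have hab : a ≠ b := by
      rintro rfl
      have h := hd.dist_eq_of_lt_of_lt ha hb
      rw [hd.dist_self] at h
      exact (hd.pos x y hxy).ne h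
    rcases hrA.2.2 a b with h | h | h
    · exact Or.inl (Or.inl ⟨a, b, ha, hb, h⟩)
    · exact absurd h hab
    · exact Or.inr (Or.inl ⟨b, a, hb, ha, h⟩)
  · exact Or.inl (Or.inr (Or.inl ⟨hxA, hyA⟩))
  · exact Or.inr (Or.inr (Or.inl ⟨hyA, hxA⟩))
  · rcases hrY.2.2 x y with h | h | h
    · exact Or.inl (Or.inr (Or.inr ⟨hxA, hyA, h⟩))
    · exact absurd h hxy
    · exact Or.inr (Or.inr (Or.inr ⟨hyA, hxA, h⟩))

theorem extendOrder_trans_of_equilateral (hd : IsUltrametric_s4 d) (hrY : IsSTO rY)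
    (hrA : IsConvexSTO (fun a b : A => d a b) rA) {x y z : X}
    (hxy : ExtendOrder d A rY rA x y) (hyz : ExtendOrder d A rY rA y z)
    (hdyz : d y z = d x y) (hdxz : d x z = d x y) : ExtendOrder d A rY rA x z := by
  unfold ExtendOrder at hxy hyz ⊢
  rw [hdyz] at hyz
  rw [hdxz]
  rcases hxy with ⟨a, b, ha, hb, hab⟩ | ⟨hxA, hyA⟩ | ⟨hxA, hyA, hxy⟩ <;>
    rcases hyz with ⟨b', c, hb', hc, hbc⟩ | ⟨hyA', hzA⟩ | ⟨hyA', hzA, hyz⟩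
  all_goals try (exfalso; simp only [MeetsBall] at *; tauto)
  · have hb'c : d b' c = d x y := by
      rw [← hdyz] at hb' hc ⊢; exact hd.dist_eq_of_lt_of_lt hb' hc
    refine Or.inl ⟨a, c, ha, hc, hrA.1.2.1 a b c hab ?_⟩
    refine hrA.respectsBalls (hd.restrict A) b' c b c hbc ?_ ?_
    · exact hb'c ▸ hd.dist_lt_of_lt (hd.symm b' y ▸ hb') hb
    · exact hb'c ▸ hd.dist_self_lt c ha
  · exact Or.inr (Or.inl ⟨⟨a, ha⟩, hzA⟩)
  · exact Or.inr (Or.inl ⟨hxA, hzA⟩)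
  · exact Or.inr (Or.inr ⟨hxA, hzA, hrY.2.1 x y z hxy hyz⟩)

theorem isConvexSTO_extendOrder (hd : IsUltrametric_s4 d) (hrY : IsConvexSTO d rY)
    (hrA : IsConvexSTO (fun a b : A => d a b) rA) : IsConvexSTO d (ExtendOrder d A rY rA) :=
  isConvexSTO_of_respectsBalls hd (fun _ _ => extendOrder_asymm hd hrY.1 hrA)
    (fun _ _ => extendOrder_total hd hrY.1 hrA.1)
    (extendOrder_respectsBalls hd (hrY.respectsBalls hd))
    (fun _ _ _ => extendOrder_trans_of_equilateral hd hrY.1 hrA)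

end Extension

/-- If `Y` is convexly order-invariant and `X` is a subspace of `Y`, then for any
convex linear orderings `<` on `Y` and `<^X` on `X`, `(Y,<)` contains a copy
of `(X,<^X)`. -/
theorem convOrdInv_contains_all_order_types
    (S : Set ℝ) (hSpos : ∀ s ∈ S, 0 < s) (Y : FinUltra S) (hY : ConvOrdInv Y)
    (A : Set (Fin Y.n))
    (rY : Fin Y.n → Fin Y.n → Prop) (hrY : IsConvexSTO Y.d rY)
    (rX : A → A → Prop) (hrX : IsConvexSTO (fun a b : A => Y.d a.1 b.1) rX) :
    ∃ f : A → Fin Y.n,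
      (∀ a b : A, Y.d (f a) (f b) = Y.d a.1 b.1) ∧
      ∀ a b : A, rX a b → rY (f a) (f b) := by
  have hd : IsUltrametric_s4 Y.d := Y.isUltrametric hSpos
  obtain ⟨g, hg, hgr⟩ := hY _ rY (isConvexSTO_extendOrder hd hrY hrX) hrY
  exact ⟨fun a => g a, fun a b => hg a b,
    fun a b hab => hgr a b (extendOrder_of_rel hd hrX.1 hab)⟩
end

section
/- Fix n ≥ 1 and an integer k ≥ 1. Let S ⊆ T be finite subtrees of ℕ^{≤n}, both of height n (every maximal element has length n). Then for every coloring of the copies of S inside ℕ^{≤n} with k colors, there is a copy T̃ of T inside ℕ^{≤n} such that all copies of S contained in T̃ receive the same color. -/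
/-- The lexicographical ordering on `ℕ^{≤n}` (finite sequences of naturals): levels
ordered by height first, then lexicographically by the first coordinate of
disagreement. -/
def lexLt (s t : List ℕ) : Prop :=
  s.length < t.length ∨ (s.length = t.length ∧ List.Lex (· < ·) s t)

/-- `A` is a subtree of `ℕ^{≤n}` of height `n`: a set of sequences of length at most
`n`, closed under initial segments, all of whose maximal elements have length `n`. -/
def IsSubtree (n : ℕ) (A : Set (List ℕ)) : Prop :=
  (∀ l ∈ A, l.length ≤ n) ∧
  (∀ l ∈ A, ∀ p : List ℕ, p <+: l → p ∈ A) ∧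
  (∀ l ∈ A, (∀ m ∈ A, l <+: m → m = l) → l.length = n)

/-- `A` is a copy of `T` : there is a bijection from `T` onto `A` preserving (in both
directions) the initial-segment partial order and the lexicographical order. -/
def IsTreeCopy (T A : Set (List ℕ)) : Prop :=
  ∃ f : List ℕ → List ℕ, Set.BijOn f T A ∧
    (∀ s ∈ T, ∀ t ∈ T, (s <+: t ↔ f s <+: f t)) ∧
    (∀ s ∈ T, ∀ t ∈ T, (lexLt s t ↔ lexLt (f s) (f t)))

/-!
Label the nonempty nodes of `T` by natural numbers, strictly increasingly along `lexLt`, and send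
each node to the sequence of labels of its nonempty initial segments: the image is a copy of `T`.
Every copy of `S` inside it is forced to preserve levels, hence is itself obtained from `S` by a
`lexLt`-increasing labelling of the nonempty nodes of `S`, and is therefore determined by the set
of labels used, a set of size `|S \ {[]}|`. Colouring these sets of naturals by the colour of the
corresponding copy of `S`, Ramsey's theorem gives an infinite homogeneous set `H`, and labelling
`T` by elements of `H` produces the required copy of `T`.
-/

theorem Set.Infinite.exists_seq_of_forall_exists {R : ℕ → Set ℕ → Prop} {M : Set ℕ}
    (hM : M.Infinite)
    (step : ∀ M' : Set ℕ, M'.Infinite →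
      ∃ a ∈ M', ∃ N ⊆ M' ∩ Set.Ioi a, N.Infinite ∧ R a N) :
    ∃ (b : ℕ → ℕ) (N : ℕ → Set ℕ), StrictMono b ∧ (∀ i, b i ∈ M) ∧
      (∀ i j, i < j → b j ∈ N i) ∧ ∀ i, R (b i) (N i) := by
  choose a ha next hnext hnext_inf hR using
    fun M' : {M' : Set ℕ // M'.Infinite} => step M'.1 M'.2
  let seq : ℕ → {M' : Set ℕ // M'.Infinite} :=
    fun i => (fun M' => ⟨next M', hnext_inf M'⟩)^[i] ⟨M, hM⟩
  have hseq_succ : ∀ i, (seq (i + 1)).1 = next (seq i) := fun i =>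
    congrArg Subtype.val (Function.iterate_succ_apply' _ i _)
  have hanti : Antitone fun i => (seq i).1 := antitone_nat_of_succ_le fun i =>
    hseq_succ i ▸ (hnext (seq i)).trans Set.inter_subset_left
  have hlater : ∀ i j, i < j → a (seq j) ∈ next (seq i) := fun i j hij =>
    hseq_succ i ▸ hanti hij (ha (seq j))
  exact ⟨fun i => a (seq i), fun i => next (seq i),
    fun i j hij => (hnext _ (hlater i j hij)).2, fun i => hanti (Nat.zero_le i) (ha (seq i)),
    hlater, fun i => hR (seq i)⟩

theorem Set.Infinite.exists_monochromatic_subset {κ : Type*} [Finite κ] {M : Set ℕ}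
    (hM : M.Infinite) (r : ℕ) (c : Finset ℕ → κ) :
    ∃ H ⊆ M, H.Infinite ∧
      ∃ col : κ, ∀ E : Finset ℕ, ↑E ⊆ H → E.card = r → c E = col := by
  induction r generalizing M c with
  | zero => exact ⟨M, subset_rfl, hM, c ∅, fun E _ hE => by rw [Finset.card_eq_zero.mp hE]⟩
  | succ r ih =>
    obtain ⟨b, N, hb, hbM, hlater, hR⟩ := hM.exists_seq_of_forall_exists
      (R := fun a N =>
        ∃ col, ∀ E : Finset ℕ, ↑E ⊆ N → E.card = r → c (insert a E) = col)
      fun M' hM' => by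
        obtain ⟨a, ha⟩ := hM'.nonempty
        obtain ⟨N, hN, hN_inf, hcol⟩ :=
          ih (hM'.sdiff (Set.finite_Iic a)) fun E => c (insert a E)
        refine ⟨a, ha, N, fun x hx => ⟨(hN hx).1, ?_⟩, hN_inf, hcol⟩
        exact Set.mem_Ioi.mpr (not_le.mp (hN hx).2)
    choose col hcol using hR
    obtain ⟨y, hy⟩ := Finite.exists_infinite_fiber col
    refine ⟨b '' (col ⁻¹' {y}), Set.image_subset_iff.mpr fun i _ => hbM i,
      (Set.infinite_coe_iff.mp hy).image hb.injective.injOn, y, fun E hE hcard => ?_⟩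
    have hne : E.Nonempty := Finset.card_pos.mp (by omega)
    obtain ⟨i, hi, hmin⟩ := hE (E.min'_mem hne)
    have hbi : b i ∈ E := hmin ▸ E.min'_mem hne
    have hrest : ↑(E.erase (b i)) ⊆ N i := by
      intro x hx
      obtain ⟨hx_ne, hxE⟩ := Finset.mem_erase.mp hx
      obtain ⟨j, -, rfl⟩ := hE hxE
      refine hlater i j (hb.lt_iff_lt.mp (lt_of_le_of_ne ?_ hx_ne.symm))
      exact hmin ▸ E.min'_le _ hxE
    have hcard' : (E.erase (b i)).card = r := by rw [Finset.card_erase_of_mem hbi]; omega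
    calc c E = c (insert (b i) (E.erase (b i))) := by rw [Finset.insert_erase hbi]
      _ = y := (hcol i _ hrest hcard').trans hi

theorem lexLt_iff_toLex_lt {s t : List ℕ} :
    lexLt s t ↔ toLex (s.length, s) < toLex (t.length, t) := by
  rw [Prod.Lex.toLex_lt_toLex]
  rfl

theorem lexLt_irrefl (s : List ℕ) : ¬ lexLt s s := by
  rw [lexLt_iff_toLex_lt]; exact lt_irrefl _

theorem lexLt_trans {s t u : List ℕ} (hst : lexLt s t) (htu : lexLt t u) : lexLt s u := by
  rw [lexLt_iff_toLex_lt] at *; exact hst.trans htu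

theorem lexLt_trichotomy (s t : List ℕ) : lexLt s t ∨ s = t ∨ lexLt t s := by
  simp only [lexLt_iff_toLex_lt]
  rcases lt_trichotomy (toLex (s.length, s)) (toLex (t.length, t)) with h | h | h
  · exact .inl h
  · exact .inr (.inl (congrArg (fun p => (ofLex p).2) h))
  · exact .inr (.inr h)

def LexStrictMonoOn (q : List ℕ → ℕ) (X : Set (List ℕ)) : Prop :=
  ∀ ⦃u⦄, u ∈ X → ∀ ⦃w⦄, w ∈ X → lexLt u w → q u < q w

namespace LexStrictMonoOn

variable {q : List ℕ → ℕ} {X : Set (List ℕ)} {u w : List ℕ}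

theorem lt_iff_lexLt (hq : LexStrictMonoOn q X) (hu : u ∈ X) (hw : w ∈ X) :
    q u < q w ↔ lexLt u w := by
  refine ⟨fun h => ?_, hq hu hw⟩
  rcases lexLt_trichotomy u w with h' | rfl | h'
  · exact h'
  · exact absurd h (lt_irrefl _)
  · exact absurd h (hq hw hu h').asymm

theorem injOn (hq : LexStrictMonoOn q X) : Set.InjOn q X := by
  intro u hu w hw h
  rcases lexLt_trichotomy u w with h' | h' | h'
  · exact absurd h (hq hu hw h').ne
  · exact h'
  · exact absurd h (hq hw hu h').ne'

end LexStrictMonoOn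

open Classical in
noncomputable def lexRank (X : Finset (List ℕ)) (u : List ℕ) : ℕ :=
  (X.filter (lexLt · u)).card

theorem lexRank_lt_lexRank {X : Finset (List ℕ)} {u w : List ℕ} (hu : u ∈ X)
    (h : lexLt u w) : lexRank X u < lexRank X w := by
  classical
  refine Finset.card_lt_card ⟨fun y hy => ?_, fun hsub => ?_⟩
  · simp only [Finset.mem_filter] at hy ⊢
    exact ⟨hy.1, lexLt_trans hy.2 h⟩
  · exact lexLt_irrefl u (Finset.mem_filter.mp (hsub (Finset.mem_filter.mpr ⟨hu, h⟩))).2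

theorem lexRank_eq_card_filter_lt {X : Finset (List ℕ)} {q : List ℕ → ℕ}
    (hq : LexStrictMonoOn q X) {u : List ℕ} (hu : u ∈ X) :
    lexRank X u = ((X.image q).filter (· < q u)).card := by
  classical
  have : (X.image q).filter (· < q u) = (X.filter (lexLt · u)).image q := by
    ext y
    simp only [Finset.mem_filter, Finset.mem_image]
    constructor
    · rintro ⟨⟨w, hw, rfl⟩, hlt⟩
      exact ⟨w, ⟨hw, (hq.lt_iff_lexLt hw hu).mp hlt⟩, rfl⟩
    · rintro ⟨w, ⟨hw, hlt⟩, rfl⟩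
      exact ⟨⟨w, hw, rfl⟩, hq hw hu hlt⟩
  rw [this, lexRank, Finset.card_image_of_injOn
    (hq.injOn.mono (Finset.coe_subset.mpr (Finset.filter_subset _ _)))]

theorem Finset.getD_sort_card_filter_lt {α : Type*} [LinearOrder α] {E : Finset α} {x : α}
    (hx : x ∈ E) (d : α) : (E.sort (· ≤ ·)).getD (E.filter (· < x)).card d = x := by
  obtain ⟨j, rfl⟩ : ∃ j, E.orderEmbOfFin rfl j = x := by
    rw [← Set.mem_range, Finset.range_orderEmbOfFin]; exact hx
  have : E.filter (· < E.orderEmbOfFin rfl j) =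
      (Finset.Iio j).map (E.orderEmbOfFin rfl).toEmbedding := by
    ext y
    simp only [Finset.mem_filter, Finset.mem_map, Finset.mem_Iio]
    constructor
    · rintro ⟨hy, hlt⟩
      obtain ⟨i, rfl⟩ : ∃ i, E.orderEmbOfFin rfl i = y := by
        rw [← Set.mem_range, Finset.range_orderEmbOfFin]; exact hy
      exact ⟨i, by simpa using hlt, rfl⟩
    · rintro ⟨i, hi, rfl⟩
      simpa using hi
  rw [this, Finset.card_map, Fin.card_Iio, List.getD_eq_getElem _ _ (by simp),
    Finset.orderEmbOfFin_apply]
  rfl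

noncomputable def lexLabel (X : Finset (List ℕ)) (E : Finset ℕ) (u : List ℕ) : ℕ :=
  (E.sort (· ≤ ·)).getD (lexRank X u) 0

theorem lexLabel_image {X : Finset (List ℕ)} {q : List ℕ → ℕ} (hq : LexStrictMonoOn q X)
    {u : List ℕ} (hu : u ∈ X) : lexLabel X (X.image q) u = q u := by
  rw [lexLabel, lexRank_eq_card_filter_lt hq hu]
  exact Finset.getD_sort_card_filter_lt (Finset.mem_image_of_mem q hu) 0

example (l : List ℕ) (j : ℕ) (h : j < l.length) : (l.take (j+1)).getLastD 0 = l[j] := by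
  simp [List.getLast?_take, h]

def relabel (v : List ℕ → ℕ) (u : List ℕ) : List ℕ :=
  (List.range u.length).map fun j => v (u.take (j + 1))

section relabel

variable (v : List ℕ → ℕ) (u : List ℕ)

@[simp]
theorem length_relabel : (relabel v u).length = u.length := by
  simp [relabel]

@[simp]
theorem getElem_relabel {j : ℕ} (hj : j < (relabel v u).length) :
    (relabel v u)[j] = v (u.take (j + 1)) := by
  simp [relabel]

theorem take_relabel (i : ℕ) : (relabel v u).take i = relabel v (u.take i) := by
  apply List.ext_getElem
  · simp
  · intro j h₁ h₂
    simp only [List.getElem_take, getElem_relabel, List.take_take]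
    congr 2
    rw [length_relabel, List.length_take] at h₂
    omega

theorem getLastD_relabel (hu : u ≠ []) : (relabel v u).getLastD 0 = v u := by
  have hlen := List.length_pos_iff.mpr hu
  rw [List.getLastD_eq_getLast?, List.getLast?_eq_getElem?, length_relabel,
    List.getElem?_eq_getElem (by simpa using Nat.sub_lt hlen one_pos)]
  simp [Nat.sub_add_cancel hlen]

theorem relabel_congr {v' : List ℕ → ℕ}
    (h : ∀ j < u.length, v (u.take (j + 1)) = v' (u.take (j + 1))) :
    relabel v u = relabel v' u :=
  List.map_congr_left fun j hj => h j (List.mem_range.mp hj)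

end relabel

theorem List.take_eq_take_of_getElem_eq {α : Type*} {u w : List α} {i : ℕ}
    (hu : i ≤ u.length) (hw : i ≤ w.length)
    (h : ∀ j (hj : j < i), u[j]'(by omega) = w[j]'(by omega)) : u.take i = w.take i :=
  List.ext_getElem (by simp only [List.length_take]; omega) fun j h₁ h₂ => by
    rw [List.length_take] at h₁
    simpa using h j (by omega)

section relabelTree

variable {X : Set (List ℕ)} {v : List ℕ → ℕ}
  (hX : ∀ u ∈ X, ∀ p, p <+: u → p ∈ X) (hv : LexStrictMonoOn v (X \ {[]}))

include hX in
theorem take_succ_mem_diff {u : List ℕ} (hu : u ∈ X) {j : ℕ} (hj : j < u.length) :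
    u.take (j + 1) ∈ X \ {[]} :=
  ⟨hX u hu _ (List.take_prefix _ _),
    by simpa [List.take_eq_nil_iff] using List.ne_nil_of_length_pos (by omega)⟩

include hv in
theorem relabel_injOn : Set.InjOn (relabel v) X := by
  intro u hu w hw h
  have hlen : u.length = w.length := by simpa using congrArg List.length h
  rcases eq_or_ne u [] with rfl | hu₀
  · exact (List.length_eq_zero_iff.mp hlen.symm).symm
  have hw₀ : w ≠ [] := by rintro rfl; simp_all
  apply hv.injOn ⟨hu, hu₀⟩ ⟨hw, hw₀⟩
  rw [← getLastD_relabel v u hu₀, ← getLastD_relabel v w hw₀, h]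

include hX hv in
theorem relabel_prefix_iff {u w : List ℕ} (hu : u ∈ X) (hw : w ∈ X) :
    relabel v u <+: relabel v w ↔ u <+: w := by
  rw [List.prefix_iff_eq_take, List.prefix_iff_eq_take, length_relabel, take_relabel]
  exact (relabel_injOn hv).eq_iff hu (hX w hw _ (List.take_prefix _ _))

include hX hv in
theorem lexLt_relabel_of_lexLt {u w : List ℕ} (hu : u ∈ X) (hw : w ∈ X) (h : lexLt u w) :
    lexLt (relabel v u) (relabel v w) := by
  rcases h with h | ⟨hlen, h⟩
  · exact .inl (by simpa using h)
  refine .inr ⟨by simpa using hlen, ?_⟩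
  obtain ⟨-, hc⟩ | ⟨i, hi₁, hi₂, hagree, hlt⟩ := List.lt_iff_exists.mp h
  · omega
  have htake : ∀ j ≤ i, u.take j = w.take j := fun j hj =>
    List.take_eq_take_of_getElem_eq (by omega) (by omega) fun l hl => hagree l (by omega)
  refine List.lt_iff_exists.mpr (.inr ⟨i, by simpa, by simpa, fun j hj => ?_, ?_⟩)
  · simp [htake (j + 1) hj]
  · simp only [getElem_relabel]
    refine hv (take_succ_mem_diff hX hu hi₁) (take_succ_mem_diff hX hw hi₂)
      (.inr ⟨by simp only [List.length_take]; omega, List.lt_iff_exists.mpr (.inr ⟨i, by simpa, by simpa, ?_, ?_⟩)⟩)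
    · simpa using hagree
    · simpa using hlt

include hX hv in
theorem relabel_lexLt_iff {u w : List ℕ} (hu : u ∈ X) (hw : w ∈ X) :
    lexLt (relabel v u) (relabel v w) ↔ lexLt u w := by
  refine ⟨fun h => ?_, lexLt_relabel_of_lexLt hX hv hu hw⟩
  rcases lexLt_trichotomy u w with h' | rfl | h'
  · exact h'
  · exact absurd h (lexLt_irrefl _)
  · exact absurd (lexLt_trans h (lexLt_relabel_of_lexLt hX hv hw hu h')) (lexLt_irrefl _)

include hX hv in
theorem isTreeCopy_image_relabel : IsTreeCopy X (relabel v '' X) :=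
  ⟨relabel v, (relabel_injOn hv).bijOn_image,
    fun _ hs _ ht => (relabel_prefix_iff hX hv hs ht).symm,
    fun _ hs _ ht => (relabel_lexLt_iff hX hv hs ht).symm⟩

end relabelTree

theorem add_sub_le_of_forall_lt_succ {g : ℕ → ℕ} {n : ℕ} (hg : ∀ i < n, g i < g (i + 1))
    {i j : ℕ} (hij : i ≤ j) (hjn : j ≤ n) : g i + (j - i) ≤ g j := by
  induction j, hij using Nat.le_induction with
  | base => simp
  | succ j hij ih => have := hg j (by omega); have := ih (by omega); omega

section IsSubtree

variable {n : ℕ} {S : Set (List ℕ)}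

theorem IsSubtree.exists_prefix_length_eq (hS : IsSubtree n S) (hSfin : S.Finite) {s : List ℕ}
    (hs : s ∈ S) : ∃ m ∈ S, s <+: m ∧ m.length = n := by
  obtain ⟨m, ⟨hmS, hsm⟩, hmax⟩ := (hSfin.subset fun _ h => h.1).exists_maximalFor
    List.length {m | m ∈ S ∧ s <+: m} ⟨s, hs, List.prefix_refl s⟩
  refine ⟨m, hmS, hsm, hS.2.2 m hmS fun m' hm' hmm' => ?_⟩
  exact (hmm'.eq_of_length (le_antisymm hmm'.length_le
    (hmax ⟨hm', hsm.trans hmm'⟩ hmm'.length_le))).symm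

theorem IsSubtree.length_map_eq (hS : IsSubtree n S) (hSfin : S.Finite) {f : List ℕ → List ℕ}
    (hf : Set.InjOn f S) (hpre : ∀ s ∈ S, ∀ t ∈ S, s <+: t → f s <+: f t)
    (hlen : ∀ s ∈ S, (f s).length ≤ n) {s : List ℕ} (hs : s ∈ S) :
    (f s).length = s.length := by
  obtain ⟨m, hmS, hsm, hm⟩ := hS.exists_prefix_length_eq hSfin hs
  have hmem : ∀ i, m.take i ∈ S := fun i => hS.2.1 m hmS _ (List.take_prefix i m)
  have hstep : ∀ i < n, (f (m.take i)).length < (f (m.take (i + 1))).length := by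
    intro i hi
    have hpfx : m.take i <+: m.take (i + 1) :=
      List.prefix_iff_eq_take.mpr (by simp [List.take_take])
    have hne : m.take i ≠ m.take (i + 1) := fun h => by
      have := congrArg List.length h
      simp only [List.length_take] at this
      omega
    have himg := hpre _ (hmem i) _ (hmem (i + 1)) hpfx
    exact lt_of_not_ge fun h => hne (hf (hmem i) (hmem (i + 1)) (himg.eq_of_length_le h))
  have hs_eq : m.take s.length = s := (List.prefix_iff_eq_take.mp hsm).symm
  have hsn : s.length ≤ n := hm ▸ hsm.length_le
  have hlow := add_sub_le_of_forall_lt_succ hstep (Nat.zero_le s.length) hsn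
  have hupp := add_sub_le_of_forall_lt_succ hstep hsn le_rfl
  rw [hs_eq] at hlow hupp
  have := hlen _ (hmem n)
  omega

end IsSubtree

section copies

variable {n : ℕ} {S T A : Set (List ℕ)} {v : List ℕ → ℕ}

theorem IsTreeCopy.exists_eq_image_relabel (hS : IsSubtree n S) (hSfin : S.Finite)
    (hT : IsSubtree n T) (hv : LexStrictMonoOn v (T \ {[]})) (hA : IsTreeCopy S A)
    (hAT : A ⊆ relabel v '' T) :
    ∃ q : List ℕ → ℕ, LexStrictMonoOn q (S \ {[]}) ∧
      Set.MapsTo q (S \ {[]}) (v '' (T \ {[]})) ∧ A = relabel q '' S := by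
  obtain ⟨f, hbij, hpre, hlex⟩ := hA
  have hlen : ∀ s ∈ S, (f s).length = s.length := fun s hs =>
    hS.length_map_eq hSfin hbij.injOn (fun s hs t ht => (hpre s hs t ht).mp)
      (fun s hs => by
        obtain ⟨t, ht, hts⟩ := hAT (hbij.mapsTo hs)
        simpa [← hts] using hT.1 t ht) hs
  have hf_take : ∀ s ∈ S, ∀ i ≤ s.length, f (s.take i) = (f s).take i := by
    intro s hs i hi
    have hpfx := (hpre _ (hS.2.1 s hs _ (List.take_prefix i s)) s hs).mp (List.take_prefix i s)
    rw [List.prefix_iff_eq_take.mp hpfx, hlen _ (hS.2.1 s hs _ (List.take_prefix i s)),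
      List.length_take, min_eq_left hi]
  have hrelabel : ∀ s ∈ S \ {[]}, ∃ t ∈ T \ {[]}, f s = relabel v t := by
    rintro s ⟨hs, hs₀⟩
    obtain ⟨t, ht, hts⟩ := hAT (hbij.mapsTo hs)
    refine ⟨t, ⟨ht, fun ht₀ => hs₀ ?_⟩, hts.symm⟩
    rw [Set.mem_singleton_iff] at ht₀ ⊢
    rw [← List.length_eq_zero_iff, ← hlen s hs, ← hts, length_relabel, ht₀, List.length_nil]
  -- As `f` preserves levels, `f s` lists the last labels of the `f`-images of the prefixes of `s`.
  refine ⟨fun s => (f s).getLastD 0, ?_, ?_, ?_⟩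
  · intro s hs w hw hsw
    obtain ⟨t, ht, hft⟩ := hrelabel s hs
    obtain ⟨t', ht', hft'⟩ := hrelabel w hw
    have := (hlex s hs.1 w hw.1).mp hsw
    rw [hft, hft', relabel_lexLt_iff hT.2.1 hv ht.1 ht'.1] at this
    show (f s).getLastD 0 < (f w).getLastD 0
    rw [hft, hft', getLastD_relabel v _ ht.2, getLastD_relabel v _ ht'.2]
    exact hv ht ht' this
  · intro s hs
    obtain ⟨t, ht, hft⟩ := hrelabel s hs
    exact ⟨t, ht, by simp only [hft, getLastD_relabel v t ht.2]⟩
  · rw [← hbij.image_eq]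
    refine Set.image_congr fun s hs => List.ext_getElem (by simp [hlen s hs]) fun j h₁ h₂ => ?_
    rw [getElem_relabel, hf_take s hs (j + 1) (by rw [length_relabel] at h₂; omega)]
    simp [List.getLast?_take, h₁]

theorem IsTreeCopy.exists_eq_image_relabel_lexLabel {S : Finset (List ℕ)}
    (hS : IsSubtree n S) (hT : IsSubtree n T) (hv : LexStrictMonoOn v (T \ {[]}))
    (hA : IsTreeCopy S A) (hAT : A ⊆ relabel v '' T) :
    ∃ E : Finset ℕ, ↑E ⊆ v '' (T \ {[]}) ∧ E.card = (S.erase []).card ∧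
      A = relabel (lexLabel (S.erase []) E) '' S := by
  obtain ⟨q, hq, hmaps, rfl⟩ := hA.exists_eq_image_relabel hS S.finite_toSet hT hv hAT
  rw [← Finset.coe_erase] at hq hmaps
  refine ⟨(S.erase []).image q, ?_, Finset.card_image_of_injOn hq.injOn, ?_⟩
  · rw [Finset.coe_image]
    exact hmaps.image_subset
  · refine Set.image_congr fun s hs => relabel_congr _ _ fun j hj => (lexLabel_image hq ?_).symm
    rw [← Finset.mem_coe, Finset.coe_erase]
    exact take_succ_mem_diff hS.2.1 hs hj

end copies

theorem tree_ramsey_in_full_tree_general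
    (n k : ℕ)
    (S T : Set (List ℕ))
    (hSfin : S.Finite) (hTfin : T.Finite)
    (hS : IsSubtree n S) (hT : IsSubtree n T) :
    ∀ χ : Set (List ℕ) → Fin k,
      ∃ B : Set (List ℕ), (∀ l ∈ B, l.length ≤ n) ∧ IsTreeCopy T B ∧
        ∀ A₁ A₂ : Set (List ℕ),
          IsTreeCopy S A₁ → A₁ ⊆ B → IsTreeCopy S A₂ → A₂ ⊆ B → χ A₁ = χ A₂ := by
  intro χ
  lift S to Finset (List ℕ) using hSfin
  lift T to Finset (List ℕ) using hTfin
  obtain ⟨H, -, hH, col, hcol⟩ := Set.infinite_univ.exists_monochromatic_subset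
    (S.erase []).card fun E => χ (relabel (lexLabel (S.erase []) E) '' S)
  set v : List ℕ → ℕ := fun u => Nat.nth (· ∈ H) (lexRank T u)
  have hv : LexStrictMonoOn v (T \ {[]}) := fun u hu w _ h =>
    Nat.nth_strictMono hH (lexRank_lt_lexRank hu.1 h)
  have hvH : v '' (T \ {[]}) ⊆ H := by
    rintro _ ⟨u, -, rfl⟩
    exact Nat.nth_mem_of_infinite hH _
  have hχ : ∀ A, IsTreeCopy S A → A ⊆ relabel v '' T → χ A = col := by
    intro A hA hAT
    obtain ⟨E, hEv, hE, rfl⟩ := hA.exists_eq_image_relabel_lexLabel hS hT hv hAT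
    exact hcol E (hEv.trans hvH) hE
  refine ⟨relabel v '' T, ?_, isTreeCopy_image_relabel hT.2.1 hv,
    fun A₁ A₂ h₁ hB₁ h₂ hB₂ => (hχ A₁ h₁ hB₁).trans (hχ A₂ h₂ hB₂).symm⟩
  rintro _ ⟨u, hu, rfl⟩
  simpa using hT.1 u hu

/-- Ramsey theorem for finite subtrees of `ℕ^{≤n}` of height `n`, inside the full
tree `ℕ^{≤n}`: for every `k`-coloring of the copies of `S` in `ℕ^{≤n}` there is a
copy of `T` inside which all copies of `S` get the same color. -/
theorem tree_ramsey_in_full_tree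
    (n k : ℕ) (hn : 1 ≤ n) (hk : 1 ≤ k)
    (S T : Set (List ℕ)) (hST : S ⊆ T)
    (hSfin : S.Finite) (hTfin : T.Finite)
    (hS : IsSubtree n S) (hT : IsSubtree n T) :
    ∀ χ : Set (List ℕ) → Fin k,
      ∃ B : Set (List ℕ), (∀ l ∈ B, l.length ≤ n) ∧ IsTreeCopy T B ∧
        ∀ A₁ A₂ : Set (List ℕ),
          IsTreeCopy S A₁ → A₁ ⊆ B → IsTreeCopy S A₂ → A₂ ⊆ B → χ A₁ = χ A₂ :=
  tree_ramsey_in_full_tree_general n k S T hSfin hTfin hS hT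
end

section
/- Let S be a countable set of positive reals. Then the space Q_S of finitely supported functions x : S → ℚ, with d(x,y) = max{s ∈ S : x(s) ≠ y(s)} for x ≠ y and d(x,x) = 0, is a countable ultrametric space with all nonzero distances in S; the lexicographical ordering <_lex is a convex linear ordering on it; and its finite ordered subspaces are, up to order-preserving isometry, exactly the finite ultrametric spaces with nonzero distances in S equipped with a convex linear ordering. In particular, every finite convexly ordered ultrametric space with distances in S embeds into (Q_S, <_lex) by an isometric order-preserving map. -/
/-- The Urysohn ultrametric space `Q_S` : finitely supported functions `S → ℚ`. -/
def QS (S : Set ℝ) := {x : S → ℚ // {s : S | x s ≠ 0}.Finite}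

/-- The distance on `Q_S` : `d x y = max {s ∈ S | x s ≠ y s}` for `x ≠ y`
(and `0` for `x = y`, the supremum of the empty set being `0`). -/
noncomputable def dQ (S : Set ℝ) (x y : S → ℚ) : ℝ :=
  sSup (Subtype.val '' {s : S | x s ≠ y s})

/-- The lexicographical ordering on `Q_S` : `x <lex y` iff `x s < y s` where `s` is the
largest element of `S` at which `x` and `y` differ. -/
def lexQ (S : Set ℝ) (x y : S → ℚ) : Prop :=
  ∃ s : S, x s < y s ∧ ∀ t : S, (s : ℝ) < (t : ℝ) → x t = y t

section Helpers

variable {S : Set ℝ}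

lemma QS.diff_finite (x y : QS S) : {s : S | x.1 s ≠ y.1 s}.Finite := by
  apply (x.2.union y.2).subset
  intro s hs
  by_contra h
  simp only [Set.mem_union, Set.mem_setOf_eq, not_or, not_not] at h
  exact hs (by rw [h.1, h.2])

lemma dQ_self (x : S → ℚ) : dQ S x x = 0 := by
  have : {s : S | x s ≠ x s} = ∅ := by ext s; simp
  rw [dQ, this]
  simp [Real.sSup_empty]

lemma dQ_comm (x y : S → ℚ) : dQ S x y = dQ S y x := by
  have : {s : S | x s ≠ y s} = {s : S | y s ≠ x s} := by ext s; simp [ne_comm]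
  rw [dQ, this, dQ]

lemma dQ_eq_of_witness (x y : S → ℚ) (s : S)
    (hne : x s ≠ y s) (h : ∀ t : S, (s : ℝ) < (t : ℝ) → x t = y t) :
    dQ S x y = s := by
  have hub : ∀ b ∈ Subtype.val '' {t : S | x t ≠ y t}, b ≤ (s : ℝ) := by
    rintro b ⟨t, ht, rfl⟩
    by_contra hlt
    exact ht (h t (lt_of_not_ge hlt))
  apply le_antisymm
  · exact csSup_le ⟨s, ⟨s, hne, rfl⟩⟩ hub
  · exact le_csSup ⟨s, hub⟩ ⟨s, hne, rfl⟩

lemma exists_max_witness (x y : QS S) (hxy : x.1 ≠ y.1) :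
    ∃ s : S, x.1 s ≠ y.1 s ∧ dQ S x.1 y.1 = s ∧
      ∀ t : S, (s : ℝ) < (t : ℝ) → x.1 t = y.1 t := by
  have hfin : (Subtype.val '' {s : S | x.1 s ≠ y.1 s}).Finite :=
    (QS.diff_finite x y).image _
  have hne : {s : S | x.1 s ≠ y.1 s}.Nonempty := by
    rw [Function.ne_iff] at hxy; exact hxy
  obtain ⟨s, hs, hval⟩ := (hne.image Subtype.val).csSup_mem hfin
  refine ⟨s, hs, hval.symm, ?_⟩
  intro t ht
  by_contra hc
  have hle : (t : ℝ) ≤ sSup (Subtype.val '' {s : S | x.1 s ≠ y.1 s}) :=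
    le_csSup hfin.bddAbove ⟨t, hc, rfl⟩
  rw [← hval] at hle
  exact absurd ht (not_lt.2 hle)

lemma dQ_mem (x y : QS S) (hxy : x ≠ y) : dQ S x.1 y.1 ∈ S := by
  obtain ⟨s, _, heq, _⟩ := exists_max_witness x y (fun h => hxy (Subtype.ext h))
  rw [heq]; exact s.2

/-- The main inductive construction: an order-isometric copy of any "convexly
enumerated" finite ultrametric space inside `Q_S`. -/
lemma main_embed (S : Set ℝ) (n : ℕ) (d : ℕ → ℕ → ℝ)
    (hconv : ∀ i j k, i < j → j < k → k < n → d i k = max (d i j) (d j k)) :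
    ∃ g : ℕ → QS S, ∀ i j, i < j → j < n →
      (∀ t : S, d i j < (t : ℝ) → (g i).1 t = (g j).1 t) ∧
      (∀ t : S, (t : ℝ) = d i j → (g i).1 t < (g j).1 t) := by
  classical
  let g0 : ℕ → (S → ℚ) := fun k => Nat.rec (fun _ => 0)
    (fun k gk => if k + 1 < n then
        (fun t : S => if d k (k + 1) < (t : ℝ) then gk t
          else if (t : ℝ) = d k (k + 1) then gk t + 1 else 0)
      else gk) k
  have hstep : ∀ k, g0 (k + 1) = if k + 1 < n then
      (fun t : S => if d k (k + 1) < (t : ℝ) then g0 k t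
        else if (t : ℝ) = d k (k + 1) then g0 k t + 1 else 0)
    else g0 k := fun k => rfl
  have step_gt : ∀ k, k + 1 < n → ∀ t : S, d k (k + 1) < (t : ℝ) →
      g0 (k + 1) t = g0 k t := by
    intro k hk t ht
    rw [hstep, if_pos hk]
    simp only [if_pos ht]
  have step_eq : ∀ k, k + 1 < n → ∀ t : S, (t : ℝ) = d k (k + 1) →
      g0 (k + 1) t = g0 k t + 1 := by
    intro k hk t ht
    rw [hstep, if_pos hk]
    simp only [if_neg (by rw [← ht]; exact lt_irrefl _ : ¬ d k (k+1) < (t : ℝ)), if_pos ht]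
  have hsupp : ∀ k, {t : S | g0 k t ≠ 0}.Finite := by
    intro k
    induction k with
    | zero =>
      have : {t : S | g0 0 t ≠ 0} = ∅ := by ext t; simp [g0]
      rw [this]; exact Set.finite_empty
    | succ k ih =>
      by_cases h : k + 1 < n
      · have hsub : {t : S | g0 (k + 1) t ≠ 0} ⊆
            {t : S | g0 k t ≠ 0} ∪ {t : S | (t : ℝ) = d k (k + 1)} := by
          intro t ht
          simp only [Set.mem_setOf_eq] at ht
          rw [hstep, if_pos h] at ht
          simp only [Set.mem_union, Set.mem_setOf_eq]
          by_cases h1 : d k (k + 1) < (t : ℝ)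
          · rw [if_pos h1] at ht; exact Or.inl ht
          · by_cases h2 : (t : ℝ) = d k (k + 1)
            · exact Or.inr h2
            · rw [if_neg h1, if_neg h2] at ht; exact absurd rfl ht
        refine (ih.union ?_).subset hsub
        apply Set.Subsingleton.finite
        intro a ha b hb
        exact Subtype.ext (ha.trans hb.symm)
      · have : g0 (k + 1) = g0 k := by rw [hstep, if_neg h]
        rw [show {t : S | g0 (k+1) t ≠ 0} = {t : S | g0 k t ≠ 0} by rw [this]]
        exact ih
  have key : ∀ j, j < n → ∀ i, i < j →
      (∀ t : S, d i j < (t : ℝ) → g0 i t = g0 j t) ∧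
      (∀ t : S, (t : ℝ) = d i j → g0 i t < g0 j t) := by
    intro j
    induction j with
    | zero => intro _ i hi; omega
    | succ j ih =>
      intro hjn i hij
      rcases Nat.lt_succ_iff_lt_or_eq.mp hij with hij' | rfl
      · have hj : j < n := Nat.lt_of_succ_lt hjn
        obtain ⟨ih1, ih2⟩ := ih hj i hij'
        have hmax := hconv i j (j + 1) hij' (Nat.lt_succ_self j) hjn
        constructor
        · intro t ht
          rw [hmax] at ht
          have h1 : d i j < (t : ℝ) := lt_of_le_of_lt (le_max_left _ _) ht
          have h2 : d j (j + 1) < (t : ℝ) := lt_of_le_of_lt (le_max_right _ _) ht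
          rw [ih1 t h1, step_gt j hjn t h2]
        · intro t ht
          rw [hmax] at ht
          rcases lt_trichotomy (d i j) (d j (j + 1)) with hc | hc | hc
          · have htv : (t : ℝ) = d j (j + 1) := by rw [ht]; exact max_eq_right hc.le
            rw [ih1 t (by rw [htv]; exact hc), step_eq j hjn t htv]
            exact lt_add_one _
          · have htv : (t : ℝ) = d j (j + 1) := by rw [ht, ← hc]; exact max_eq_left le_rfl
            have htv' : (t : ℝ) = d i j := by rw [htv, hc]
            calc g0 i t < g0 j t := ih2 t htv'
              _ < g0 j t + 1 := lt_add_one _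
              _ = g0 (j + 1) t := (step_eq j hjn t htv).symm
          · have htv : (t : ℝ) = d i j := by rw [ht]; exact max_eq_left hc.le
            rw [step_gt j hjn t (by rw [htv]; exact hc)]
            exact ih2 t htv
      · constructor
        · intro t ht; exact (step_gt i hjn t ht).symm
        · intro t ht; rw [step_eq i hjn t ht]; exact lt_add_one _
  exact ⟨fun k => ⟨g0 k, hsupp k⟩, fun i j hij hjn => key j hjn i hij⟩

lemma exists_sorted_enum (n : ℕ) (rX : Fin n → Fin n → Prop)
    (hirr : ∀ x, ¬ rX x x) (htrans : ∀ x y z, rX x y → rX y z → rX x z)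
    (htri : ∀ x y, rX x y ∨ x = y ∨ rX y x) :
    ∃ e : Fin n → Fin n, Function.Surjective e ∧ ∀ i j : Fin n, i < j → rX (e i) (e j) := by
  classical
  letI : IsTrans (Fin n) (fun a b => ¬ rX b a) := ⟨by
    intro a b c hab hbc h
    rcases htri a b with h1 | rfl | h1
    · exact hbc (htrans _ _ _ h h1)
    · exact hbc h
    · exact hab h1⟩
  letI : IsAntisymm (Fin n) (fun a b => ¬ rX b a) := ⟨by
    intro a b hab hba
    rcases htri a b with h1 | h1 | h1
    · exact absurd h1 hba
    · exact h1
    · exact absurd h1 hab⟩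
  letI : IsTotal (Fin n) (fun a b => ¬ rX b a) := ⟨by
    intro a b
    by_contra h
    push_neg at h
    obtain ⟨h1, h2⟩ := h
    exact hirr a (htrans _ _ _ h2 h1)⟩
  let l := Finset.univ.sort (fun a b => ¬ rX b a)
  have hlen : l.length = n := by
    simp [l, Finset.length_sort]
  have hnodup : l.Nodup := Finset.sort_nodup _ _
  have hsorted : l.Pairwise (fun a b => ¬ rX b a) := Finset.pairwise_sort _ _
  refine ⟨fun i => l.get (Fin.cast hlen.symm i), ?_, ?_⟩
  · intro a
    have : a ∈ l := by simp [l, Finset.mem_sort]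
    obtain ⟨i, hi⟩ := List.get_of_mem this
    exact ⟨Fin.cast hlen i, by simpa using hi⟩
  · intro i j hij
    have h1 : ¬ rX (l.get (Fin.cast hlen.symm j)) (l.get (Fin.cast hlen.symm i)) :=
      List.Pairwise.rel_get_of_lt hsorted (by simpa using hij)
    have h2 : l.get (Fin.cast hlen.symm i) ≠ l.get (Fin.cast hlen.symm j) := by
      intro h
      have := hnodup.get_inj_iff.mp h
      rw [Fin.ext_iff] at this
      simp at this
      omega
    rcases htri (l.get (Fin.cast hlen.symm i)) (l.get (Fin.cast hlen.symm j)) with h | h | h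
    · exact h
    · exact absurd h h2
    · exact absurd h h1

end Helpers

/-- `(Q_S, <lex)` is a countable convexly ordered ultrametric space with nonzero
distances in `S`, whose finite ordered subspaces are exactly the finite convexly
ordered ultrametric spaces with distances in `S`; in particular every such space
embeds into `(Q_S, <lex)` by an isometric order-preserving map. -/
theorem QS_universal_convexly_ordered_ultrametric
    (S : Set ℝ) (hScount : S.Countable) (hSpos : ∀ s ∈ S, 0 < s) :
    -- Q_S is countable
    Countable (QS S) ∧
    -- d is an ultrametric with nonzero distances in S
    (∀ x : QS S, dQ S x.1 x.1 = 0) ∧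
    (∀ x y : QS S, dQ S x.1 y.1 = dQ S y.1 x.1) ∧
    (∀ x y : QS S, x ≠ y → dQ S x.1 y.1 ∈ S) ∧
    (∀ x y : QS S, x ≠ y → 0 < dQ S x.1 y.1) ∧
    (∀ x y z : QS S, dQ S x.1 z.1 ≤ max (dQ S x.1 y.1) (dQ S y.1 z.1)) ∧
    -- <lex is a convex linear ordering on Q_S
    IsConvexSTO (fun x y : QS S => dQ S x.1 y.1) (fun x y : QS S => lexQ S x.1 y.1) ∧
    -- every finite convexly ordered ultrametric space with distances in S embeds into
    -- (Q_S, <lex) by an isometric order-preserving map (hence, with the previous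
    -- conjuncts, the finite ordered subspaces of (Q_S, <lex) are exactly the members
    -- of U^{c<}_S)
    (∀ (X : FinUltra S) (rX : Fin X.n → Fin X.n → Prop), IsConvexSTO X.d rX →
      ∃ f : Fin X.n → QS S,
        (∀ a b : Fin X.n, dQ S (f a).1 (f b).1 = X.d a b) ∧
        (∀ a b : Fin X.n, rX a b → lexQ S (f a).1 (f b).1)) := by
  classical
  have hpos : ∀ x y : QS S, x ≠ y → 0 < dQ S x.1 y.1 := fun x y hxy =>
    hSpos _ (dQ_mem x y hxy)
  have hnonneg : ∀ x y : QS S, 0 ≤ dQ S x.1 y.1 := by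
    intro x y
    by_cases h : x = y
    · rw [h, dQ_self]
    · exact (hpos x y h).le
  refine ⟨?_, fun x => dQ_self x.1, fun x y => dQ_comm x.1 y.1, dQ_mem, hpos, ?_, ?_, ?_⟩
  · -- countability
    haveI := hScount.to_subtype
    have hinj : Function.Injective (fun x : QS S =>
        (⟨x.2.toFinset, x.1, fun s => x.2.mem_toFinset⟩ : S →₀ ℚ)) := by
      intro x y h
      apply Subtype.ext
      funext s
      exact DFunLike.congr_fun h s
    exact hinj.countable
  · -- ultrametric inequality
    intro x y z
    by_cases hxz : x = z
    · subst hxz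
      rw [dQ_self]
      exact le_max_of_le_left (hnonneg x y)
    · obtain ⟨s, hs, heq, _⟩ := exists_max_witness x z (fun h => hxz (Subtype.ext h))
      rw [heq]
      rcases Classical.em (x.1 s = y.1 s) with h1 | h1
      · have h2 : y.1 s ≠ z.1 s := fun h => hs (h1.trans h)
        refine le_max_of_le_right (le_csSup ((QS.diff_finite y z).image _).bddAbove ⟨s, h2, rfl⟩)
      · exact le_max_of_le_left (le_csSup ((QS.diff_finite x y).image _).bddAbove ⟨s, h1, rfl⟩)
  · -- convex STO
    have lex_dQ : ∀ (x y : S → ℚ), lexQ S x y → ∃ s : S, dQ S x y = s ∧ x s < y s ∧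
        ∀ t : S, (s : ℝ) < (t : ℝ) → x t = y t := by
      rintro x y ⟨s, hlt, h⟩
      exact ⟨s, dQ_eq_of_witness x y s hlt.ne h, hlt, h⟩
    refine ⟨⟨?_, ?_, ?_⟩, ?_⟩
    · intro x hx
      obtain ⟨s, hs, -⟩ := hx
      exact lt_irrefl _ hs
    · -- transitivity
      rintro x y z ⟨s₁, hs₁, h₁⟩ ⟨s₂, hs₂, h₂⟩
      rcases lt_trichotomy (s₁ : ℝ) (s₂ : ℝ) with hc | hc | hc
      · refine ⟨s₂, ?_, fun t ht => (h₁ t (hc.trans ht)).trans (h₂ t ht)⟩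
        rw [h₁ s₂ hc]; exact hs₂
      · have : s₁ = s₂ := Subtype.ext hc
        subst this
        exact ⟨s₁, hs₁.trans hs₂, fun t ht => (h₁ t ht).trans (h₂ t ht)⟩
      · refine ⟨s₁, ?_, fun t ht => (h₁ t ht).trans (h₂ t (hc.trans ht))⟩
        rw [← h₂ s₁ hc]; exact hs₁
    · -- trichotomy
      intro x y
      by_cases hxy : x = y
      · exact Or.inr (Or.inl hxy)
      · obtain ⟨s, hs, _, hgt⟩ := exists_max_witness x y (fun h => hxy (Subtype.ext h))
        rcases lt_or_gt_of_ne hs with h | h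
        · exact Or.inl ⟨s, h, hgt⟩
        · exact Or.inr (Or.inr ⟨s, h, fun t ht => (hgt t ht).symm⟩)
    · -- convexity
      rintro x y z hxy hyz
      obtain ⟨s₁, hd₁, hlt₁, h₁⟩ := lex_dQ _ _ hxy
      obtain ⟨s₂, hd₂, hlt₂, h₂⟩ := lex_dQ _ _ hyz
      show dQ S x.1 y.1 ≤ dQ S x.1 z.1 ∧ dQ S y.1 z.1 ≤ dQ S x.1 z.1
      rcases lt_trichotomy (s₁ : ℝ) (s₂ : ℝ) with hc | hc | hc
      · have hxz : dQ S x.1 z.1 = s₂ := by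
          apply dQ_eq_of_witness
          · rw [h₁ s₂ hc]; exact hlt₂.ne
          · intro t ht; rw [h₁ t (hc.trans ht), h₂ t ht]
        rw [hd₁, hd₂, hxz]
        exact ⟨hc.le, le_rfl⟩
      · have hss : s₁ = s₂ := Subtype.ext hc
        subst hss
        have hxz : dQ S x.1 z.1 = s₁ := by
          apply dQ_eq_of_witness
          · exact (hlt₁.trans hlt₂).ne
          · intro t ht; rw [h₁ t ht, h₂ t ht]
        rw [hd₁, hd₂, hxz]
        exact ⟨le_rfl, le_rfl⟩
      · have hxz : dQ S x.1 z.1 = s₁ := by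
          apply dQ_eq_of_witness
          · exact (hlt₁.trans_eq (h₂ s₁ hc)).ne
          · intro t ht; rw [h₁ t ht, h₂ t (hc.trans ht)]
        rw [hd₁, hd₂, hxz]
        exact ⟨le_rfl, hc.le⟩
  · -- embedding of finite spaces
    rintro X rX ⟨⟨hirr, htrans, htri⟩, hcvx⟩
    rcases Nat.eq_zero_or_pos X.n with h0 | hnpos
    · exact ⟨fun a => absurd a.2 (by omega),
        fun a b => absurd a.2 (by omega),
        fun a b _ => absurd a.2 (by omega)⟩
    · obtain ⟨e, hsurj, hmono⟩ := exists_sorted_enum X.n rX hirr htrans htri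
      let ψ : Fin X.n → Fin X.n := fun a => Classical.choose (hsurj a)
      have he : ∀ a, e (ψ a) = a := fun a => Classical.choose_spec (hsurj a)
      let E : ℕ → Fin X.n := fun i =>
        if h : i < X.n then e ⟨i, h⟩ else e ⟨0, hnpos⟩
      have hEmono : ∀ i j, i < j → j < X.n → rX (E i) (E j) := by
        intro i j hij hjn
        have hin : i < X.n := hij.trans hjn
        simp only [E, dif_pos hin, dif_pos hjn]
        exact hmono _ _ (by simpa using hij)
      have hasym : ∀ a b, rX a b → ¬ rX b a := fun a b h h' =>
        hirr a (htrans a b a h h')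
      have hconv : ∀ i j k, i < j → j < k → k < X.n →
          X.d (E i) (E k) = max (X.d (E i) (E j)) (X.d (E j) (E k)) := by
        intro i j k hij hjk hkn
        have h1 := hEmono i j hij (hjk.trans hkn)
        have h2 := hEmono j k hjk hkn
        obtain ⟨ha, hb⟩ := hcvx _ _ _ h1 h2
        exact le_antisymm (X.ultra _ _ _) (max_le ha hb)
      obtain ⟨g, hg⟩ := main_embed S X.n (fun i j => X.d (E i) (E j)) hconv
      refine ⟨fun a => g (ψ a).1, ?_, ?_⟩
      · intro a b
        have ha : E (ψ a).1 = a := by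
          simp only [E, dif_pos (ψ a).2, Fin.eta, he]
        have hb : E (ψ b).1 = b := by
          simp only [E, dif_pos (ψ b).2, Fin.eta, he]
        rcases lt_trichotomy (ψ a).1 (ψ b).1 with hc | hc | hc
        · obtain ⟨h1, h2⟩ := hg (ψ a).1 (ψ b).1 hc (ψ b).2
          have hab : a ≠ b := by
            intro h; subst h; exact absurd hc (lt_irrefl _)
          have hd : X.d (E (ψ a).1) (E (ψ b).1) = X.d a b := by rw [ha, hb]
          have hmem : X.d a b ∈ S := X.d_mem a b hab
          have h2' := h2 ⟨X.d a b, hmem⟩ hd.symm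
          have h1' : ∀ t : S, X.d a b < (t : ℝ) →
              (g (ψ a).1).1 t = (g (ψ b).1).1 t := by
            intro t ht; exact h1 t (by rw [hd]; exact ht)
          exact dQ_eq_of_witness _ _ ⟨X.d a b, hmem⟩ h2'.ne h1'
        · have hab : a = b := by
            have hψ : ψ a = ψ b := Fin.val_injective hc
            rw [← he a, ← he b, hψ]
          rw [hab, dQ_self, X.d_self]
        · obtain ⟨h1, h2⟩ := hg (ψ b).1 (ψ a).1 hc (ψ a).2
          have hab : b ≠ a := by
            intro h; subst h; exact absurd hc (lt_irrefl _)
          have hd : X.d (E (ψ b).1) (E (ψ a).1) = X.d b a := by rw [ha, hb]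
          have hmem : X.d b a ∈ S := X.d_mem b a hab
          have h2' := h2 ⟨X.d b a, hmem⟩ hd.symm
          have h1' : ∀ t : S, X.d b a < (t : ℝ) →
              (g (ψ b).1).1 t = (g (ψ a).1).1 t := by
            intro t ht; exact h1 t (by rw [hd]; exact ht)
          rw [dQ_comm, X.d_symm]
          exact dQ_eq_of_witness _ _ ⟨X.d b a, hmem⟩ h2'.ne h1'
      · intro a b hab
        have hne : (ψ a).1 ≠ (ψ b).1 := by
          intro h
          have hψ : ψ a = ψ b := Fin.val_injective h
          have : a = b := by rw [← he a, ← he b, hψ]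
          exact hirr a (this ▸ hab)
        have ha : E (ψ a).1 = a := by
          simp only [E, dif_pos (ψ a).2, Fin.eta, he]
        have hb : E (ψ b).1 = b := by
          simp only [E, dif_pos (ψ b).2, Fin.eta, he]
        rcases Nat.lt_or_ge (ψ a).1 (ψ b).1 with hc | hc
        · obtain ⟨h1, h2⟩ := hg (ψ a).1 (ψ b).1 hc (ψ b).2
          have hab' : a ≠ b := fun h => hirr a (h ▸ hab)
          have hd : X.d (E (ψ a).1) (E (ψ b).1) = X.d a b := by rw [ha, hb]
          have hmem : X.d a b ∈ S := X.d_mem a b hab'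
          have h2' := h2 ⟨X.d a b, hmem⟩ hd.symm
          have h1' : ∀ t : S, (X.d a b : ℝ) < (t : ℝ) →
              (g (ψ a).1).1 t = (g (ψ b).1).1 t := by
            intro t ht; exact h1 t (by rw [hd]; exact ht)
          exact ⟨⟨X.d a b, hmem⟩, h2', h1'⟩
        · have hc' : (ψ b).1 < (ψ a).1 := lt_of_le_of_ne hc (Ne.symm hne)
          have := hEmono (ψ b).1 (ψ a).1 hc' (ψ a).2
          rw [ha, hb] at this
          exact absurd hab (hasym b a this)
end

section
/- Let S be a countable set of positive reals having 0 as an accumulation point. Let U_S be the set of functions x : S → ℚ whose support is contained in {s_i : i ∈ ℕ} for some strictly decreasing sequence (s_i) of elements of S converging to 0, with d(x,y) = min{s ∈ S : x(t) = y(t) for all t ∈ S with t > s} for x ≠ y and d(x,x)=0. Then (U_S, d) is a complete ultrametric space in which Q_S is a dense subspace; hence U_S is the completion of the ultrametric space Q_S. -/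
/-!
Both the support of an element of `U_S` and the set where two elements disagree are subsets of
`S` with only finitely many points above any `δ > 0`. Such a set has a greatest element, which is
the distance, and this makes `d` an ultrametric. Conversely, a subset of `S` that is finite above
every `δ > 0` can be listed, together with a null sequence of `S`, in decreasing order; so `U_S`
consists exactly of the functions with such supports. Density of `Q_S` follows by truncating at
small `r ∈ S`, and a Cauchy sequence stabilises at each `s ∈ S`, its pointwise limit lying in
`U_S`.
-/

open Classical

/-- Membership in `U_S` : the support of `x : S → ℚ` is contained in the range of some
strictly decreasing sequence of elements of `S` converging to `0`. -/
def USsupp (S : Set ℝ) (x : S → ℚ) : Prop :=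
  ∃ f : ℕ → ℝ, StrictAnti f ∧ (∀ i, f i ∈ S) ∧
    Filter.Tendsto f Filter.atTop (nhds 0) ∧
    ∀ s : S, x s ≠ 0 → ∃ i, (s : ℝ) = f i

/-- The space `U_S`, completion of `Q_S`. -/
def US (S : Set ℝ) := {x : S → ℚ // USsupp S x}

/-- The distance on `U_S` : `d x y = min {s ∈ S | x and y agree above s}` for `x ≠ y`,
and `d x x = 0`. -/
noncomputable def dU (S : Set ℝ) (x y : US S) : ℝ :=
  if x = y then 0
  else sInf {r : ℝ | r ∈ S ∧ ∀ t : S, r < (t : ℝ) → x.1 t = y.1 t}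

open Filter Set Topology

def FiniteAbove (P : Set ℝ) : Prop := ∀ δ > 0, (P ∩ Ioi δ).Finite

namespace FiniteAbove

variable {P Q T : Set ℝ}

lemma subset (hQ : FiniteAbove Q) (h : P ⊆ Q) : FiniteAbove P :=
  fun δ hδ => (hQ δ hδ).subset (inter_subset_inter_left _ h)

lemma union (hP : FiniteAbove P) (hQ : FiniteAbove Q) : FiniteAbove (P ∪ Q) := fun δ hδ => by
  rw [union_inter_distrib_right]
  exact (hP δ hδ).union (hQ δ hδ)

lemma of_finite (h : P.Finite) : FiniteAbove P := fun _ _ => h.inter_of_left _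

lemma range_of_tendsto_zero {f : ℕ → ℝ} (hf : Tendsto f atTop (𝓝 0)) :
    FiniteAbove (range f) := by
  intro δ hδ
  have hfin : {n | ¬f n < δ}.Finite := by
    rw [← eventually_cofinite, Nat.cofinite_eq_atTop]
    exact hf.eventually (gt_mem_nhds hδ)
  refine (hfin.image f).subset ?_
  rintro _ ⟨⟨n, rfl⟩, hn⟩
  exact ⟨n, not_lt.2 (le_of_lt hn), rfl⟩

lemma isGreatest_sSup (hT : FiniteAbove T) (hpos : ∀ q ∈ T, 0 < q) (hne : T.Nonempty) :
    IsGreatest T (sSup T) := by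
  obtain ⟨q, hq⟩ := hne
  have hq0 := hpos q hq
  have hfin : (T ∩ Ici q).Finite :=
    (hT (q / 2) (half_pos hq0)).subset fun t ⟨ht, hqt⟩ =>
      ⟨ht, show q / 2 < t by linarith [mem_Ici.1 hqt]⟩
  obtain ⟨m, ⟨hmT, hqm⟩, hmax⟩ := exists_max_image _ id hfin ⟨q, hq, self_mem_Ici⟩
  have hm : IsGreatest T m :=
    ⟨hmT, fun t ht => (le_total q t).elim (fun h => hmax t ⟨ht, h⟩) (fun h => h.trans hqm)⟩
  rwa [hm.csSup_eq]

end FiniteAbove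

/-- Lists `Q` in decreasing order when `Q` is `FiniteAbove`, positive and accumulates at `0`;
otherwise the `sSup`s may be junk values. -/
noncomputable def descEnum (Q : Set ℝ) : ℕ → ℝ
  | 0 => sSup Q
  | n + 1 => sSup (Q ∩ Iio (descEnum Q n))

section descEnum

variable {Q : Set ℝ} (hQ : FiniteAbove Q) (hpos : ∀ q ∈ Q, 0 < q)
  (hQ0 : ∀ ε > 0, ∃ q ∈ Q, q < ε)
include hQ hpos hQ0

lemma isGreatest_descEnum_zero : IsGreatest Q (descEnum Q 0) :=
  hQ.isGreatest_sSup hpos (let ⟨q, hq, _⟩ := hQ0 1 one_pos; ⟨q, hq⟩)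

lemma isGreatest_descEnum_succ {n : ℕ} (hn : descEnum Q n ∈ Q) :
    IsGreatest (Q ∩ Iio (descEnum Q n)) (descEnum Q (n + 1)) :=
  (hQ.subset inter_subset_left).isGreatest_sSup (fun q hq => hpos q hq.1)
    (let ⟨q, hq, hlt⟩ := hQ0 _ (hpos _ hn); ⟨q, hq, hlt⟩)

lemma descEnum_mem : ∀ n, descEnum Q n ∈ Q
  | 0 => (isGreatest_descEnum_zero hQ hpos hQ0).1
  | n + 1 => (isGreatest_descEnum_succ hQ hpos hQ0 (descEnum_mem n)).1.1

lemma strictAnti_descEnum : StrictAnti (descEnum Q) :=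
  strictAnti_nat_of_succ_lt fun n =>
    (isGreatest_descEnum_succ hQ hpos hQ0 (descEnum_mem hQ hpos hQ0 n)).1.2

lemma tendsto_descEnum : Tendsto (descEnum Q) atTop (𝓝 0) := by
  refine tendsto_order.2 ⟨fun a ha => Eventually.of_forall fun n =>
    ha.trans (hpos _ (descEnum_mem hQ hpos hQ0 n)), fun a ha => ?_⟩
  rw [← Nat.cofinite_eq_atTop, eventually_cofinite]
  refine ((hQ (a / 2) (half_pos ha)).preimage
    (strictAnti_descEnum hQ hpos hQ0).injective.injOn).subset fun n hn => ?_
  exact ⟨descEnum_mem hQ hpos hQ0 n, show a / 2 < _ by linarith [not_lt.1 hn]⟩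

lemma subset_range_descEnum : Q ⊆ range (descEnum Q) := by
  intro q hq
  have key : ∀ n, q ∈ range (descEnum Q) ∨ q < descEnum Q n := by
    intro n
    induction n with
    | zero => exact ((isGreatest_descEnum_zero hQ hpos hQ0).2 hq).eq_or_lt.imp (⟨0, ·.symm⟩) id
    | succ n ih =>
      refine ih.elim Or.inl fun h => ?_
      exact ((isGreatest_descEnum_succ hQ hpos hQ0 (descEnum_mem hQ hpos hQ0 n)).2
        ⟨hq, h⟩).eq_or_lt.imp (⟨n + 1, ·.symm⟩) id
  obtain ⟨n, hn⟩ :=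
    ((tendsto_descEnum hQ hpos hQ0).eventually (gt_mem_nhds (hpos q hq))).exists
  exact (key n).resolve_right hn.not_gt

end descEnum

lemma exists_strictAnti_tendsto_zero_superset {S P : Set ℝ} (hSpos : ∀ s ∈ S, 0 < s)
    (hacc : ∀ ε > 0, ∃ s ∈ S, s < ε) (hPS : P ⊆ S) (hP : FiniteAbove P) :
    ∃ f : ℕ → ℝ, StrictAnti f ∧ (∀ i, f i ∈ S) ∧ Tendsto f atTop (𝓝 0) ∧
      P ⊆ range f := by
  choose s hsS hs using fun n : ℕ => hacc (1 / (n + 1)) Nat.one_div_pos_of_nat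
  have hs0 : Tendsto s atTop (𝓝 0) := squeeze_zero (fun n => (hSpos _ (hsS n)).le)
    (fun n => (hs n).le) tendsto_one_div_add_atTop_nhds_zero_nat
  have hQS : P ∪ range s ⊆ S := union_subset hPS (range_subset_iff.2 hsS)
  have hQ : FiniteAbove (P ∪ range s) := hP.union (.range_of_tendsto_zero hs0)
  have hpos : ∀ q ∈ P ∪ range s, 0 < q := fun q hq => hSpos q (hQS hq)
  have hQ0 : ∀ ε > 0, ∃ q ∈ P ∪ range s, q < ε := fun ε hε =>
    let ⟨n, hn⟩ := (hs0.eventually (gt_mem_nhds hε)).exists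
    ⟨s n, Or.inr ⟨n, rfl⟩, hn⟩
  exact ⟨_, strictAnti_descEnum hQ hpos hQ0, fun i => hQS (descEnum_mem hQ hpos hQ0 i),
    tendsto_descEnum hQ hpos hQ0, subset_union_left.trans (subset_range_descEnum hQ hpos hQ0)⟩

section US

variable {S : Set ℝ}

lemma USsupp.finiteAbove {x : S → ℚ} (hx : USsupp S x) :
    FiniteAbove ((↑) '' Function.support x) := by
  obtain ⟨f, -, -, hf, hsupp⟩ := hx
  refine (FiniteAbove.range_of_tendsto_zero hf).subset ?_
  rintro _ ⟨s, hs, rfl⟩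
  obtain ⟨i, hi⟩ := hsupp s hs
  exact ⟨i, hi.symm⟩

lemma usSupp_of_finiteAbove (hSpos : ∀ s ∈ S, 0 < s) (hacc : ∀ ε > 0, ∃ s ∈ S, s < ε)
    {x : S → ℚ} (hx : FiniteAbove ((↑) '' Function.support x)) : USsupp S x := by
  obtain ⟨f, hanti, hfS, hf, hsub⟩ := exists_strictAnti_tendsto_zero_superset hSpos hacc
    (image_subset_iff.2 fun s _ => s.2) hx
  refine ⟨f, hanti, hfS, hf, fun s hs => ?_⟩
  obtain ⟨i, hi⟩ := hsub (mem_image_of_mem _ hs)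
  exact ⟨i, hi.symm⟩

lemma usSupp_of_finite (hSpos : ∀ s ∈ S, 0 < s) (hacc : ∀ ε > 0, ∃ s ∈ S, s < ε)
    {x : S → ℚ} (hx : {s : S | x s ≠ 0}.Finite) : USsupp S x :=
  usSupp_of_finiteAbove hSpos hacc (.of_finite (hx.image _))

lemma finiteAbove_disagreement (x y : US S) :
    FiniteAbove ((↑) '' {s : S | x.1 s ≠ y.1 s}) := by
  refine (x.2.finiteAbove.union y.2.finiteAbove).subset ?_
  rintro _ ⟨s, hs, rfl⟩
  by_cases hx : x.1 s = 0
  · exact Or.inr ⟨s, fun hy => hs (hx.trans hy.symm), rfl⟩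
  · exact Or.inl ⟨s, hx, rfl⟩

lemma dU_self (x : US S) : dU S x x = 0 := if_pos rfl

lemma dU_comm (x y : US S) : dU S x y = dU S y x := by
  by_cases h : x = y
  · rw [h]
  · simp only [dU, if_neg h, if_neg (Ne.symm h), eq_comm (a := x.1 _)]

variable (hSpos : ∀ s ∈ S, 0 < s)
include hSpos

lemma isGreatest_dU {x y : US S} (hxy : x ≠ y) :
    IsGreatest ((↑) '' {s : S | x.1 s ≠ y.1 s}) (dU S x y) := by
  set D : Set ℝ := (↑) '' {s : S | x.1 s ≠ y.1 s}
  have hD : IsGreatest D (sSup D) := by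
    refine (finiteAbove_disagreement x y).isGreatest_sSup ?_ ?_
    · rintro _ ⟨s, -, rfl⟩
      exact hSpos s s.2
    · obtain ⟨s, hs⟩ := Function.ne_iff.1 (Subtype.coe_injective.ne hxy)
      exact ⟨s, s, hs, rfl⟩
  obtain ⟨s₀, hs₀, hs₀D⟩ := hD.1
  suffices IsLeast {r : ℝ | r ∈ S ∧ ∀ t : S, r < t → x.1 t = y.1 t} (sSup D) by
    rwa [dU, if_neg hxy, this.csInf_eq]
  refine ⟨⟨hs₀D ▸ s₀.2, fun t ht => not_not.1 fun hne => ?_⟩, fun r ⟨_, hr⟩ => ?_⟩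
  · exact ht.not_ge (hD.2 ⟨t, hne, rfl⟩)
  · exact not_lt.1 fun hlt => hs₀ (hr s₀ (hs₀D ▸ hlt))

lemma dU_mem {x y : US S} (hxy : x ≠ y) : dU S x y ∈ S :=
  let ⟨s, _, hs⟩ := (isGreatest_dU hSpos hxy).1
  hs ▸ s.2

lemma dU_pos {x y : US S} (hxy : x ≠ y) : 0 < dU S x y := hSpos _ (dU_mem hSpos hxy)

lemma dU_nonneg (x y : US S) : 0 ≤ dU S x y := by
  by_cases h : x = y
  · rw [h, dU_self]
  · exact (dU_pos hSpos h).le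

lemma dU_eq_sSup {x y : US S} (hxy : x ≠ y) :
    dU S x y = sSup ((↑) '' {s : S | x.1 s ≠ y.1 s}) :=
  (isGreatest_dU hSpos hxy).csSup_eq.symm

lemma dU_le_iff {x y : US S} {r : ℝ} (hr : 0 ≤ r) :
    dU S x y ≤ r ↔ ∀ t : S, r < t → x.1 t = y.1 t := by
  by_cases hxy : x = y
  · simp [hxy, dU_self, hr]
  · rw [isLUB_le_iff (isGreatest_dU hSpos hxy).isLUB, mem_upperBounds, forall_mem_image]
    exact forall_congr' fun t => by simp only [mem_ofPred_eq, not_imp_comm, not_le]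

lemma eq_of_dU_lt {x y : US S} {t : S} (h : dU S x y < t) : x.1 t = y.1 t :=
  (dU_le_iff hSpos (dU_nonneg hSpos x y)).1 le_rfl t h

lemma dU_le_max (x y z : US S) : dU S x z ≤ max (dU S x y) (dU S y z) :=
  (dU_le_iff hSpos (le_max_of_le_left (dU_nonneg hSpos x y))).2 fun _ ht =>
    (eq_of_dU_lt hSpos ((le_max_left _ _).trans_lt ht)).trans
      (eq_of_dU_lt hSpos ((le_max_right _ _).trans_lt ht))

variable (hacc : ∀ ε > 0, ∃ s ∈ S, s < ε)
include hacc

lemma exists_finite_support_dU_le (y : US S) {r : ℝ} (hr : r ∈ S) :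
    ∃ x : US S, {s : S | x.1 s ≠ 0}.Finite ∧ dU S x y ≤ r := by
  let x : S → ℚ := fun s => if r < s then y.1 s else 0
  have hx : {s : S | x s ≠ 0}.Finite := by
    refine ((y.2.finiteAbove r (hSpos r hr)).preimage Subtype.val_injective.injOn).subset ?_
    intro s hs
    have hrs : r < s := by_contra fun h => hs (if_neg h)
    exact ⟨⟨s, by simpa [x, hrs] using hs, rfl⟩, hrs⟩
  refine ⟨⟨x, usSupp_of_finite hSpos hacc hx⟩, hx, ?_⟩
  exact (dU_le_iff hSpos (hSpos r hr).le).2 fun t ht => if_pos ht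

lemma exists_limit_of_cauchy (u : ℕ → US S)
    (hu : ∀ ε : ℝ, 0 < ε → ∃ N : ℕ, ∀ m ≥ N, ∀ n ≥ N, dU S (u m) (u n) < ε) :
    ∃ x : US S, ∀ ε : ℝ, 0 < ε → ∃ N : ℕ, ∀ n ≥ N, dU S (u n) x < ε := by
  choose N hN using fun s : S => hu s (hSpos s s.2)
  let x : S → ℚ := fun s => (u (N s)).1 s
  have hagree : ∀ ρ : S, ∀ n ≥ N ρ, ∀ t : S, (ρ : ℝ) < t → (u n).1 t = x t := by
    intro ρ n hn t ht
    let m := max (N t) (N ρ)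
    calc (u n).1 t = (u m).1 t := eq_of_dU_lt hSpos ((hN ρ n hn m (le_max_right _ _)).trans ht)
      _ = x t := (eq_of_dU_lt hSpos (hN t _ le_rfl m (le_max_left _ _))).symm
  have hx : USsupp S x := by
    refine usSupp_of_finiteAbove hSpos hacc fun δ hδ => ?_
    obtain ⟨ρ, hρS, hρδ⟩ := hacc δ hδ
    refine ((u (N ⟨ρ, hρS⟩)).2.finiteAbove δ hδ).subset ?_
    rintro _ ⟨⟨t, ht, rfl⟩, hδt⟩
    refine ⟨⟨t, ?_, rfl⟩, hδt⟩
    rwa [Function.mem_support, hagree ⟨ρ, hρS⟩ _ le_rfl t (hρδ.trans hδt)]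
  refine ⟨⟨x, hx⟩, fun ε hε => ?_⟩
  obtain ⟨ρ, hρS, hρε⟩ := hacc ε hε
  exact ⟨N ⟨ρ, hρS⟩, fun n hn =>
    ((dU_le_iff hSpos (hSpos ρ hρS).le).2 (hagree ⟨ρ, hρS⟩ n hn)).trans_lt hρε⟩

end US

theorem US_is_completion_of_QS_general
    (S : Set ℝ) (hSpos : ∀ s ∈ S, 0 < s)
    (hacc : ∀ ε > 0, ∃ s ∈ S, s < ε) :
    -- Q_S sits inside U_S : every finitely supported function belongs to U_S
    (∀ x : S → ℚ, {s : S | x s ≠ 0}.Finite → USsupp S x) ∧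
    -- d is an ultrametric on U_S with nonzero distances in S
    (∀ x : US S, dU S x x = 0) ∧
    (∀ x y : US S, dU S x y = dU S y x) ∧
    (∀ x y : US S, x ≠ y → dU S x y ∈ S) ∧
    (∀ x y : US S, x ≠ y → 0 < dU S x y) ∧
    (∀ x y z : US S, dU S x z ≤ max (dU S x y) (dU S y z)) ∧
    -- on Q_S, d coincides with the distance of Q_S, namely max{s ∈ S : x s ≠ y s}
    (∀ x y : US S, {s : S | x.1 s ≠ 0}.Finite → {s : S | y.1 s ≠ 0}.Finite → x ≠ y →
      dU S x y = sSup (Subtype.val '' {s : S | x.1 s ≠ y.1 s})) ∧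
    -- Q_S is dense in U_S
    (∀ y : US S, ∀ ε : ℝ, 0 < ε →
      ∃ x : US S, {s : S | x.1 s ≠ 0}.Finite ∧ dU S x y < ε) ∧
    -- U_S is complete: every Cauchy sequence converges
    (∀ u : ℕ → US S,
      (∀ ε : ℝ, 0 < ε → ∃ N : ℕ, ∀ m ≥ N, ∀ n ≥ N, dU S (u m) (u n) < ε) →
      ∃ x : US S, ∀ ε : ℝ, 0 < ε → ∃ N : ℕ, ∀ n ≥ N, dU S (u n) x < ε) := by
  refine ⟨fun _ => usSupp_of_finite hSpos hacc, dU_self, dU_comm, fun _ _ => dU_mem hSpos,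
    fun _ _ => dU_pos hSpos, dU_le_max hSpos, fun _ _ _ _ => dU_eq_sSup hSpos,
    fun y ε hε => ?_, exists_limit_of_cauchy hSpos hacc⟩
  obtain ⟨r, hr, hrε⟩ := hacc ε hε
  obtain ⟨x, hx, hxy⟩ := exists_finite_support_dU_le hSpos hacc y hr
  exact ⟨x, hx, hxy.trans_lt hrε⟩

/-- `(U_S, d)` is a complete ultrametric space in which the set of finitely supported
elements (i.e. `Q_S`) is a dense subspace (with the same distance as `Q_S`); hence
`U_S` is the completion of `Q_S`. -/
theorem US_is_completion_of_QS
    (S : Set ℝ) (hScount : S.Countable) (hSpos : ∀ s ∈ S, 0 < s)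
    (hacc : ∀ ε > 0, ∃ s ∈ S, s < ε) :
    -- Q_S sits inside U_S : every finitely supported function belongs to U_S
    (∀ x : S → ℚ, {s : S | x s ≠ 0}.Finite → USsupp S x) ∧
    -- d is an ultrametric on U_S with nonzero distances in S
    (∀ x : US S, dU S x x = 0) ∧
    (∀ x y : US S, dU S x y = dU S y x) ∧
    (∀ x y : US S, x ≠ y → dU S x y ∈ S) ∧
    (∀ x y : US S, x ≠ y → 0 < dU S x y) ∧
    (∀ x y z : US S, dU S x z ≤ max (dU S x y) (dU S y z)) ∧
    -- on Q_S, d coincides with the distance of Q_S, namely max{s ∈ S : x s ≠ y s}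
    (∀ x y : US S, {s : S | x.1 s ≠ 0}.Finite → {s : S | y.1 s ≠ 0}.Finite → x ≠ y →
      dU S x y = sSup (Subtype.val '' {s : S | x.1 s ≠ y.1 s})) ∧
    -- Q_S is dense in U_S
    (∀ y : US S, ∀ ε : ℝ, 0 < ε →
      ∃ x : US S, {s : S | x.1 s ≠ 0}.Finite ∧ dU S x y < ε) ∧
    -- U_S is complete: every Cauchy sequence converges
    (∀ u : ℕ → US S,
      (∀ ε : ℝ, 0 < ε → ∃ N : ℕ, ∀ m ≥ N, ∀ n ≥ N, dU S (u m) (u n) < ε) →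
      ∃ x : US S, ∀ ε : ℝ, 0 < ε → ∃ N : ℕ, ∀ n ≥ N, dU S (u n) x < ε) :=
  US_is_completion_of_QS_general S hSpos hacc
end
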